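/- arXiv:1903.03824 — 4 statements merged into one kernel-verified Lean document; each statement's English description precedes it below -/
import Mathlib

section
/- Let R ∈ (0,∞], let φ : [0,R) → ℝ be strictly increasing and convex, and define ρ : B̊_R^{(d)} → (0,∞) by ρ(x) = exp(−φ(|x|)), assumed Lebesgue-integrable. Then for all x, y ∈ B̊_R^{(d)}, the Wasserstein distance satisfies W(U_ρ(x,·), U_ρ(y,·)) ≤ (1 − 1/(d+1)) · | |x| − |y| |. -/
open MeasureTheory Set ENNReal Filter

noncomputable section

abbrev Euc (d : ℕ) : Type := EuclideanSpace ℝ (Fin d)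

def levelSet {d : ℕ} (G : Set (Euc d)) (ρ : Euc d → ℝ) (t : ℝ) : Set (Euc d) :=
  {x ∈ G | t ≤ ρ x}

def sliceKernel {d : ℕ} (G : Set (Euc d)) (ρ : Euc d → ℝ) (x : Euc d) : Measure (Euc d) :=
  (ENNReal.ofReal (ρ x))⁻¹ •
    ((volume.restrict (Ioc (0 : ℝ) (ρ x))).bind fun t =>
      (volume (levelSet G ρ t))⁻¹ • volume.restrict (levelSet G ρ t))

def wassersteinDist {α : Type*} [MeasurableSpace α] [PseudoEMetricSpace α]
    (μ ν : Measure α) : ℝ≥0∞ :=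
  ⨅ γ ∈ {γ : Measure (α × α) | γ.map Prod.fst = μ ∧ γ.map Prod.snd = ν},
    ∫⁻ p, edist p.1 p.2 ∂γ

def openBall (d : ℕ) (R : ℝ≥0∞) : Set (Euc d) := {x | (‖x‖₊ : ℝ≥0∞) < R}

def phiDom (R : ℝ≥0∞) : Set ℝ := {s | 0 ≤ s ∧ ENNReal.ofReal s < R}

open Metric

namespace SliceAux

variable {R : ℝ≥0∞} {φ : ℝ → ℝ}

def radSet (R : ℝ≥0∞) (φ : ℝ → ℝ) (c : ℝ) : Set ℝ := {s | s ∈ phiDom R ∧ φ s ≤ c}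

noncomputable def radAux (R : ℝ≥0∞) (φ : ℝ → ℝ) (c : ℝ) : ℝ := sSup (radSet R φ c)

lemma mem_phiDom_of_le {s' s : ℝ} (h : s' ∈ phiDom R) (h0 : 0 ≤ s) (hle : s ≤ s') :
    s ∈ phiDom R := ⟨h0, lt_of_le_of_lt (ENNReal.ofReal_le_ofReal hle) h.2⟩

lemma bddAbove_radSet (hR : 0 < R) (hmono : StrictMonoOn φ (phiDom R))
    (hconv : ConvexOn ℝ (phiDom R) φ) (c : ℝ) : BddAbove (radSet R φ c) := by
  by_cases htop : R = ⊤
  · subst htop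
    have h0 : (0:ℝ) ∈ phiDom ⊤ := ⟨le_refl _, by simp⟩
    have h1 : (1:ℝ) ∈ phiDom ⊤ := ⟨zero_le_one, by simp⟩
    have hk : 0 < φ 1 - φ 0 := sub_pos.2 (hmono h0 h1 one_pos)
    refine ⟨max 1 ((c - φ 0) / (φ 1 - φ 0)), fun s hs => ?_⟩
    rcases le_or_gt s 1 with h | h
    · exact le_max_of_le_left h
    · refine le_max_of_le_right ?_
      have hsd : s ∈ phiDom ⊤ := hs.1
      have := hconv.secant_mono h0 h1 hsd (by norm_num) (by linarith) (by linarith)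
      rw [sub_zero, sub_zero, div_one] at this
      -- (φ 1 - φ 0) ≤ (φ s - φ 0)/s
      rw [le_div_iff₀ (by linarith : (0:ℝ) < s)] at this
      rw [le_div_iff₀ hk]
      nlinarith [hs.2]
  · refine ⟨R.toReal, fun s hs => ?_⟩
    have := hs.1.2
    have h0 := hs.1.1
    have := (ENNReal.ofReal_lt_iff_lt_toReal h0 htop).1 this
    linarith

lemma radAux_nonneg (c : ℝ) : 0 ≤ radAux R φ c :=
  Real.sSup_nonneg (fun s hs => hs.1.1)

lemma radAux_mono (hR : 0 < R) (hmono : StrictMonoOn φ (phiDom R))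
    (hconv : ConvexOn ℝ (phiDom R) φ) : Monotone (radAux R φ) := by
  intro c c' hcc
  rcases eq_empty_or_nonempty (radSet R φ c) with h | h
  · rw [radAux, h, Real.sSup_empty]; exact radAux_nonneg c'
  · exact csSup_le_csSup (bddAbove_radSet hR hmono hconv c') h
      (fun s hs => ⟨hs.1, hs.2.trans hcc⟩)

lemma mem_le_radAux (hR : 0 < R) (hmono : StrictMonoOn φ (phiDom R))
    (hconv : ConvexOn ℝ (phiDom R) φ) {s c : ℝ} (hs : s ∈ phiDom R) (hφ : φ s ≤ c) :
    s ≤ radAux R φ c :=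
  le_csSup (bddAbove_radSet hR hmono hconv c) ⟨hs, hφ⟩

lemma convex_increment (hconv : ConvexOn ℝ (phiDom R) φ) {p q h : ℝ}
    (hp : p ∈ phiDom R) (hph : p + h ∈ phiDom R) (hq : q ∈ phiDom R)
    (hqh : q + h ∈ phiDom R) (hpq : p ≤ q) (hh : 0 ≤ h) :
    φ (p + h) - φ p ≤ φ (q + h) - φ q := by
  rcases hh.eq_or_lt with rfl | hh
  · simp
  rcases hpq.eq_or_lt with rfl | hpq
  · simp
  have h1 := hconv.secant_mono hp hph hqh (by linarith) (by linarith) (by linarith)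
  have h2 := hconv.secant_mono hqh hp hq (by linarith) (by linarith) hpq.le
  rw [show p - (q + h) = -((q + h) - p) by ring,
      show φ p - φ (q + h) = -(φ (q + h) - φ p) by ring, neg_div_neg_eq,
      show q - (q + h) = -h by ring,
      show φ q - φ (q + h) = -(φ (q + h) - φ q) by ring, neg_div_neg_eq] at h2
  rw [add_sub_cancel_left] at h1
  have h3 : (φ (p + h) - φ p) / h ≤ (φ (q + h) - φ q) / h := h1.trans h2
  rwa [div_le_div_iff_of_pos_right hh] at h3

lemma radAux_sub_le (hR : 0 < R) (hmono : StrictMonoOn φ (phiDom R))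
    (hconv : ConvexOn ℝ (phiDom R) φ) {a b c : ℝ} (ha : a ∈ phiDom R) (hb : b ∈ phiDom R)
    (hba : b ≤ a) (hc : 0 ≤ c) :
    radAux R φ (c + φ a) ≤ radAux R φ (c + φ b) + (a - b) := by
  have hbm : b ≤ radAux R φ (c + φ b) := mem_le_radAux hR hmono hconv hb (by linarith)
  refine csSup_le ⟨a, ha, by linarith⟩ (fun s hs => ?_)
  obtain ⟨hsd, hsφ⟩ := hs
  rcases le_or_gt s a with h | h
  · linarith
  · have hmem : s - a + b ∈ phiDom R :=
      mem_phiDom_of_le hsd (by linarith [hb.1]) (by linarith)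
    have hinc := convex_increment hconv hb (by rw [show b + (s - a) = s - a + b by ring]; exact hmem)
      ha (by rw [show a + (s - a) = s by ring]; exact hsd) hba (by linarith)
    rw [show b + (s - a) = s - a + b by ring, show a + (s - a) = s by ring] at hinc
    have : s - a + b ≤ radAux R φ (c + φ b) :=
      mem_le_radAux hR hmono hconv hmem (by linarith)
    linarith

lemma abs_radAux_sub (hR : 0 < R) (hmono : StrictMonoOn φ (phiDom R))
    (hconv : ConvexOn ℝ (phiDom R) φ) {a b c : ℝ} (ha : a ∈ phiDom R) (hb : b ∈ phiDom R)
    (hc : 0 ≤ c) :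
    |radAux R φ (c + φ a) - radAux R φ (c + φ b)| ≤ |a - b| := by
  rcases le_total b a with hba | hab
  · have h1 := radAux_sub_le hR hmono hconv ha hb hba hc
    have h2 : radAux R φ (c + φ b) ≤ radAux R φ (c + φ a) :=
      radAux_mono hR hmono hconv (by have := hmono.monotoneOn hb ha hba; linarith)
    rw [abs_of_nonneg (by linarith), abs_of_nonneg (by linarith)]
    linarith
  · have h1 := radAux_sub_le hR hmono hconv hb ha hab hc
    have h2 : radAux R φ (c + φ a) ≤ radAux R φ (c + φ b) :=
      radAux_mono hR hmono hconv (by have := hmono.monotoneOn ha hb hab; linarith)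
    rw [abs_of_nonpos (by linarith), abs_of_nonpos (by linarith)]
    linarith

end SliceAux

-- stage 2 (appended to p1 content in test)
namespace SliceAux

open Metric

variable {d : ℕ} {R : ℝ≥0∞} {φ : ℝ → ℝ}

lemma mem_openBall_iff {z : Euc d} : z ∈ openBall d R ↔ ‖z‖ ∈ phiDom R := by
  simp only [openBall, phiDom, mem_setOf_eq, norm_nonneg, true_and]
  rw [ENNReal.ofReal_eq_coe_nnreal (norm_nonneg z)]; exact Iff.rfl

lemma levelSet_eq {t : ℝ} (ht : 0 < t) :
    levelSet (openBall d R) (fun z : Euc d => Real.exp (-φ ‖z‖)) t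
      = {z : Euc d | ‖z‖ ∈ radSet R φ (-Real.log t)} := by
  ext z
  simp only [levelSet, mem_setOf_eq, mem_sep_iff, radSet, mem_openBall_iff]
  constructor
  · rintro ⟨h1, h2⟩
    refine ⟨h1, ?_⟩
    have := (Real.log_le_iff_le_exp ht).2 h2
    linarith
  · rintro ⟨h1, h2⟩
    refine ⟨h1, (Real.log_le_iff_le_exp ht).1 (by linarith)⟩

lemma sandwich (hd : 0 < d) (hR : 0 < R) (hmono : StrictMonoOn φ (phiDom R))
    (hconv : ConvexOn ℝ (phiDom R) φ) {t : ℝ} (ht : 0 < t) {w : Euc d}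
    (hw : ‖w‖ ∈ radSet R φ (-Real.log t)) :
    volume.restrict (levelSet (openBall d R) (fun z : Euc d => Real.exp (-φ ‖z‖)) t)
        = volume.restrict (ball (0 : Euc d) (radAux R φ (-Real.log t)))
      ∧ volume (levelSet (openBall d R) (fun z : Euc d => Real.exp (-φ ‖z‖)) t)
        = volume (ball (0 : Euc d) (radAux R φ (-Real.log t))) := by
  haveI : Nonempty (Fin d) := ⟨⟨0, hd⟩⟩
  set c := -Real.log t
  set m := radAux R φ c with hm
  set L := levelSet (openBall d R) (fun z : Euc d => Real.exp (-φ ‖z‖)) t with hL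
  have hne : (radSet R φ c).Nonempty := ⟨‖w‖, hw⟩
  have hsub1 : ball (0 : Euc d) m ⊆ L := by
    intro z hz
    rw [hL, levelSet_eq ht]
    rw [mem_ball_zero_iff] at hz
    obtain ⟨s', hs', hlt⟩ := exists_lt_of_lt_csSup hne hz
    exact ⟨mem_phiDom_of_le hs'.1 (norm_nonneg z) hlt.le,
      le_trans (hmono.monotoneOn (mem_phiDom_of_le hs'.1 (norm_nonneg z) hlt.le) hs'.1 hlt.le) hs'.2⟩
  have hsub2 : L ⊆ closedBall (0 : Euc d) m := by
    intro z hz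
    rw [hL, levelSet_eq ht] at hz
    rw [mem_closedBall_zero_iff]
    exact le_csSup (bddAbove_radSet hR hmono hconv c) hz
  have hae : L =ᵐ[volume] ball (0 : Euc d) m := by
    rw [MeasureTheory.ae_eq_set]
    constructor
    · refine measure_mono_null (fun z hz => ?_) (Measure.addHaar_sphere volume 0 m)
      rw [← Metric.closedBall_diff_ball]
      exact ⟨hsub2 hz.1, hz.2⟩
    · have hempty : ball (0 : Euc d) m \ L = ∅ := diff_eq_empty.2 hsub1
      rw [hempty]; exact measure_empty
  exact ⟨Measure.restrict_congr_set hae, measure_congr hae⟩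

end SliceAux
namespace SliceAux

variable {d : ℕ} {R : ℝ≥0∞} {φ : ℝ → ℝ}

lemma unifBall (hd : 0 < d) {m : ℝ} (hm : 0 < m) :
    Measure.map (fun z : Euc d => m • z)
        ((volume (ball (0 : Euc d) 1))⁻¹ • volume.restrict (ball (0 : Euc d) 1))
      = (volume (ball (0 : Euc d) m))⁻¹ • volume.restrict (ball (0 : Euc d) m) := by
  haveI : Nonempty (Fin d) := ⟨⟨0, hd⟩⟩
  have hfr : Module.finrank ℝ (Euc d) = d := finrank_euclideanSpace_fin
  have hpre : (fun z : Euc d => m • z) ⁻¹' (ball (0 : Euc d) m) = ball (0 : Euc d) 1 := by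
    ext z
    simp only [mem_preimage, mem_ball_zero_iff, norm_smul, Real.norm_eq_abs,
      abs_of_pos hm]
    constructor
    · intro h; nlinarith [norm_nonneg z]
    · intro h; nlinarith [norm_nonneg z]
  have hmap : Measure.map (fun z : Euc d => m • z) (volume : Measure (Euc d))
      = ENNReal.ofReal ((m ^ d)⁻¹) • volume := by
    rw [Measure.map_addHaar_smul volume hm.ne', hfr, abs_of_pos (by positivity)]
  have h1 : Measure.map (fun z : Euc d => m • z) (volume.restrict (ball (0 : Euc d) 1))
      = ENNReal.ofReal ((m ^ d)⁻¹) • volume.restrict (ball (0 : Euc d) m) := by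
    rw [← hpre, ← Measure.restrict_map (measurable_const_smul m) measurableSet_ball, hmap,
      Measure.restrict_smul]
  rw [Measure.map_smul, h1]
  have hball : volume (ball (0 : Euc d) m)
      = ENNReal.ofReal (m ^ d) * volume (ball (0 : Euc d) 1) := by
    rw [Measure.addHaar_ball volume 0 hm.le, hfr]
  rw [hball, smul_smul, ENNReal.mul_inv (Or.inl (by simp [ENNReal.ofReal_eq_zero, not_le, pow_pos hm d]))
    (Or.inl ofReal_ne_top)]
  congr 1
  rw [ENNReal.ofReal_inv_of_pos (by positivity), mul_comm]

lemma lt_radAux (hR : 0 < R) (hmono : StrictMonoOn φ (phiDom R))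
    (hconv : ConvexOn ℝ (phiDom R) φ) {a c : ℝ} (ha : a ∈ phiDom R) (hac : φ a < c) :
    a < radAux R φ c := by
  -- find b₀ ∈ phiDom R with a < b₀
  obtain ⟨b₀, hb₀, hab₀⟩ : ∃ b₀, b₀ ∈ phiDom R ∧ a < b₀ := by
    by_cases htop : R = ⊤
    · exact ⟨a + 1, ⟨by linarith [ha.1], by simp [htop]⟩, by linarith⟩
    · have haR : a < R.toReal := (ENNReal.ofReal_lt_iff_lt_toReal ha.1 htop).1 ha.2
      refine ⟨(a + R.toReal) / 2, ⟨by linarith [ha.1], ?_⟩, by linarith⟩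
      rw [ENNReal.ofReal_lt_iff_lt_toReal (by linarith [ha.1]) htop]
      linarith
  by_cases hcb : φ b₀ ≤ c
  · exact lt_of_lt_of_le hab₀ (mem_le_radAux hR hmono hconv hb₀ hcb)
  · push_neg at hcb
    set θ := (c - φ a) / (φ b₀ - φ a) with hθ
    have hθ0 : 0 < θ := div_pos (by linarith) (by linarith)
    have hθ1 : θ < 1 := (div_lt_one (by linarith)).2 (by linarith)
    set s' := (1 - θ) * a + θ * b₀ with hs'
    have hs'a : a < s' := by nlinarith
    have hs'b : s' ≤ b₀ := by nlinarith
    have hs'dom : s' ∈ phiDom R := mem_phiDom_of_le hb₀ (by nlinarith [ha.1, hb₀.1]) hs'b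
    have hcv := hconv.2 ha hb₀ (by linarith : (0:ℝ) ≤ 1 - θ) hθ0.le (by ring)
    simp only [smul_eq_mul] at hcv
    have hφs' : φ s' ≤ c := by
      have : (1 - θ) * φ a + θ * φ b₀ = φ a + θ * (φ b₀ - φ a) := by ring
      rw [this] at hcv
      have : θ * (φ b₀ - φ a) = c - φ a := by
        rw [hθ]; rw [div_mul_cancel₀]; linarith
      linarith [hcv, this.le]
    exact lt_of_lt_of_le hs'a (mem_le_radAux hR hmono hconv hs'dom hφs')

end SliceAux
namespace SliceAux

variable {d : ℕ} {R : ℝ≥0∞} {φ : ℝ → ℝ}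

lemma map_eq_sliceKernel (hd : 0 < d) (hR : 0 < R) (hmono : StrictMonoOn φ (phiDom R))
    (hconv : ConvexOn ℝ (phiDom R) φ) {w : Euc d} (hw : w ∈ openBall d R) :
    Measure.map (fun p : ℝ × Euc d =>
        radAux R φ (-Real.log (Real.exp (-φ ‖w‖) * p.1)) • p.2)
      ((volume.restrict (Ioc (0:ℝ) 1)).prod
        ((volume (ball (0 : Euc d) 1))⁻¹ • volume.restrict (ball (0 : Euc d) 1)))
      = sliceKernel (openBall d R) (fun z => Real.exp (-φ ‖z‖)) w := by
  haveI : Nonempty (Fin d) := ⟨⟨0, hd⟩⟩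
  set V := volume (ball (0 : Euc d) 1) with hV
  have hV0 : V ≠ 0 := (measure_ball_pos volume 0 one_pos).ne'
  have hVtop : V ≠ ⊤ := measure_ball_lt_top.ne
  set ν : Measure (Euc d) := V⁻¹ • volume.restrict (ball (0 : Euc d) 1) with hν
  haveI : IsFiniteMeasure ν := by
    constructor
    rw [hν, Measure.smul_apply, Measure.restrict_apply_univ, smul_eq_mul,
      ENNReal.inv_mul_cancel hV0 hVtop]
    exact one_lt_top
  set ρw := Real.exp (-φ ‖w‖) with hρw
  have hρ : 0 < ρw := Real.exp_pos _
  set L : ℝ → Set (Euc d) :=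
    levelSet (openBall d R) (fun z : Euc d => Real.exp (-φ ‖z‖)) with hLdef
  have hLanti : ∀ {t t' : ℝ}, t ≤ t' → L t' ⊆ L t := by
    intro t t' htt z hz
    exact ⟨hz.1, le_trans htt hz.2⟩
  have hg : Measurable (fun p : ℝ × Euc d => radAux R φ (-Real.log (ρw * p.1)) • p.2) := by
    have hrad : Measurable (radAux R φ) := (radAux_mono hR hmono hconv).measurable
    exact (hrad.comp ((Real.measurable_log.comp (measurable_fst.const_mul ρw)).neg)).smul
      measurable_snd
  have hFmeas : ∀ s : Set (Euc d), MeasurableSet s →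
      Measurable (fun t : ℝ => (volume (L t))⁻¹ * (volume.restrict (L t)) s) := by
    intro s hs
    have h1 : Monotone (fun t : ℝ => (volume (L t))⁻¹) := by
      intro t t' htt
      exact ENNReal.inv_le_inv.2 (measure_mono (hLanti htt))
    have h2 : Antitone (fun t : ℝ => (volume.restrict (L t)) s) := by
      intro t t' htt
      simp only [Measure.restrict_apply hs]
      exact measure_mono (inter_subset_inter_right _ (hLanti htt))
    exact h1.measurable.mul h2.measurable
  have hker : Measurable (fun t : ℝ => (volume (L t))⁻¹ • volume.restrict (L t)) := by
    refine Measure.measurable_of_measurable_coe _ (fun s hs => ?_)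
    simpa only [Measure.smul_apply, smul_eq_mul] using hFmeas s hs
  ext s hs
  rw [Measure.map_apply hg hs, Measure.prod_apply (hg hs)]
  rw [sliceKernel, Measure.smul_apply, Measure.bind_apply hs hker.aemeasurable]
  -- change of variables on the RHS
  have hpre : (fun u : ℝ => ρw * u) ⁻¹' (Ioc 0 ρw) = Ioc 0 1 := by
    ext u
    simp only [mem_preimage, mem_Ioc]
    constructor
    · rintro ⟨h1, h2⟩
      constructor
      · nlinarith
      · nlinarith
    · rintro ⟨h1, h2⟩
      exact ⟨mul_pos hρ h1, by nlinarith⟩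
  have hrestr : volume.restrict (Ioc (0:ℝ) ρw)
      = ENNReal.ofReal ρw • Measure.map (fun u => ρw * u) (volume.restrict (Ioc (0:ℝ) 1)) := by
    rw [← hpre, ← Measure.restrict_map (measurable_const_mul ρw) measurableSet_Ioc,
      Real.map_volume_mul_left hρ.ne', Measure.restrict_smul, smul_smul,
      abs_of_pos (inv_pos.2 hρ), ← ENNReal.ofReal_mul hρ.le, mul_inv_cancel₀ hρ.ne',
      ofReal_one, one_smul]
  have hbindint : ∫⁻ t in Ioc (0:ℝ) ρw, ((volume (L t))⁻¹ • volume.restrict (L t)) s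
      = ENNReal.ofReal ρw *
        ∫⁻ u in Ioc (0:ℝ) 1, (volume (L (ρw * u)))⁻¹ * (volume.restrict (L (ρw * u))) s := by
    have : ∀ t : ℝ, ((volume (L t))⁻¹ • volume.restrict (L t)) s
        = (volume (L t))⁻¹ * (volume.restrict (L t)) s := fun t => rfl
    simp only [this]
    rw [hrestr, lintegral_smul_measure, lintegral_map (hFmeas s hs) (measurable_const_mul ρw), smul_eq_mul]
  rw [hbindint, smul_eq_mul, ← mul_assoc, ENNReal.inv_mul_cancel (ofReal_pos.2 hρ).ne' ofReal_ne_top, one_mul]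
  -- now a.e. equality of integrands
  have hone : (volume.restrict (Ioc (0:ℝ) 1)) {(1:ℝ)} = 0 := by
    rw [Measure.restrict_apply (measurableSet_singleton _)]
    exact measure_mono_null inter_subset_left Real.volume_singleton
  have hae : ∀ᵐ u ∂(volume.restrict (Ioc (0:ℝ) 1)), u ∈ Ioo (0:ℝ) 1 := by
    have h2 : ∀ᵐ u ∂(volume.restrict (Ioc (0:ℝ) 1)), u ∈ Ioc (0:ℝ) 1 :=
      ae_restrict_mem measurableSet_Ioc
    have h3 : ∀ᵐ u ∂(volume.restrict (Ioc (0:ℝ) 1)), u ∉ ({(1:ℝ)} : Set ℝ) :=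
      (measure_eq_zero_iff_ae_notMem.1 hone)
    filter_upwards [h2, h3] with u hu hu1
    exact ⟨hu.1, lt_of_le_of_ne hu.2 (by simpa using hu1)⟩
  refine lintegral_congr_ae (hae.mono fun u hu => ?_)
  have ht0 : 0 < ρw * u := mul_pos hρ hu.1
  have htlt : ρw * u < ρw := mul_lt_of_lt_one_right hρ hu.2
  set t := ρw * u with htdef
  set c := -Real.log t with hcdef
  set m := radAux R φ c with hmdef
  have hwdom : ‖w‖ ∈ phiDom R := mem_openBall_iff.1 hw
  have hφwc : φ ‖w‖ < c := by
    have hlog := Real.log_lt_log ht0 htlt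
    rw [hρw, Real.log_exp] at hlog
    simp only [hcdef]
    linarith
  have hm : 0 < m := (norm_nonneg w).trans_lt (lt_radAux hR hmono hconv hwdom hφwc)
  have hws : ‖w‖ ∈ radSet R φ c := ⟨hwdom, hφwc.le⟩
  obtain ⟨hr1, hr2⟩ := sandwich hd hR hmono hconv ht0 hws
  have hset : (Prod.mk u ⁻¹'
      ((fun p : ℝ × Euc d => radAux R φ (-Real.log (ρw * p.1)) • p.2) ⁻¹' s))
      = (fun z : Euc d => m • z) ⁻¹' s := rfl
  dsimp only
  rw [hset, ← Measure.map_apply (measurable_const_smul m) hs, hν, unifBall hd hm]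
  rw [← hLdef] at hr1 hr2
  rw [hr2, Measure.smul_apply, smul_eq_mul, hr1]

end SliceAux
namespace SliceAux

lemma lintegral_norm_ball {d : ℕ} (hd : 0 < d) :
    ∫⁻ z in ball (0 : Euc d) 1, ENNReal.ofReal ‖z‖ ∂volume
      = ENNReal.ofReal ((d : ℝ) / ((d : ℝ) + 1)) * volume (ball (0 : Euc d) 1) := by
  haveI : Nonempty (Fin d) := ⟨⟨0, hd⟩⟩
  have hVtop : volume (ball (0 : Euc d) 1) ≠ ⊤ := measure_ball_lt_top.ne
  have hint : IntegrableOn (fun z : Euc d => ‖z‖) (ball 0 1) volume :=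
    (continuous_norm.continuousOn.integrableOn_compact (isCompact_closedBall 0 1)).mono_set
      ball_subset_closedBall
  rw [← ofReal_integral_eq_lintegral_ofReal hint
    (Eventually.of_forall fun z => norm_nonneg z)]
  have hI : ∫ z in ball (0 : Euc d) 1, ‖z‖
      = ∫ z : Euc d, (Ioo (0:ℝ) 1).indicator id ‖z‖ := by
    rw [← integral_indicator measurableSet_ball]
    congr 1
    funext z
    by_cases h : z ∈ ball (0 : Euc d) 1
    · rw [indicator_of_mem h]
      rw [mem_ball_zero_iff] at h
      rcases (norm_nonneg z).eq_or_lt with h0 | h0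
      · simp [indicator, ← h0]
      · simp [Set.indicator_apply, mem_Ioo, h0, h]
    · rw [indicator_of_notMem h]
      rw [mem_ball_zero_iff, not_lt] at h
      rw [indicator_of_notMem (by simp [mem_Ioo]; intro _; linarith)]
  rw [hI, integral_fun_norm_addHaar volume ((Ioo (0:ℝ) 1).indicator id)]
  have hfr : Module.finrank ℝ (Euc d) = d := finrank_euclideanSpace_fin
  rw [hfr]
  have hrad : ∫ y in Ioi (0:ℝ), y ^ (d - 1) • (Ioo (0:ℝ) 1).indicator id y
      = ∫ y in Ioo (0:ℝ) 1, y ^ d := by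
    have heq : ∀ y : ℝ, y ^ (d - 1) • (Ioo (0:ℝ) 1).indicator id y
        = (Ioo (0:ℝ) 1).indicator (fun y => y ^ d) y := by
      intro y
      by_cases h : y ∈ Ioo (0:ℝ) 1
      · rw [indicator_of_mem h, indicator_of_mem h, smul_eq_mul]
        show y ^ (d - 1) * y = y ^ d
        rw [← pow_succ]
        congr 1
        omega
      · rw [indicator_of_notMem h, indicator_of_notMem h, smul_zero]
    simp only [heq]
    rw [integral_indicator measurableSet_Ioo, Measure.restrict_restrict measurableSet_Ioo,
      inter_eq_self_of_subset_left Ioo_subset_Ioi_self]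
  rw [hrad]
  have hpow : ∫ y in Ioo (0:ℝ) 1, y ^ d = 1 / ((d : ℝ) + 1) := by
    rw [← integral_Ioc_eq_integral_Ioo, ← intervalIntegral.integral_of_le zero_le_one,
      integral_pow]
    simp
  rw [hpow]
  rw [nsmul_eq_mul, smul_eq_mul]
  have hd1 : ((d : ℝ) + 1) ≠ 0 := by positivity
  have : (d : ℝ) * ((volume (ball (0 : Euc d) 1)).toReal * (1 / ((d : ℝ) + 1)))
      = (volume (ball (0 : Euc d) 1)).toReal * ((d : ℝ) / ((d : ℝ) + 1)) := by
    field_simp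
  rw [measureReal_def, this, ENNReal.ofReal_mul ENNReal.toReal_nonneg, ENNReal.ofReal_toReal hVtop, mul_comm]

end SliceAux
namespace SliceAux

variable {d : ℕ} {R : ℝ≥0∞} {φ : ℝ → ℝ}

lemma measurable_g (hR : 0 < R) (hmono : StrictMonoOn φ (phiDom R))
    (hconv : ConvexOn ℝ (phiDom R) φ) (r : ℝ) :
    Measurable (fun p : ℝ × Euc d => radAux R φ (-Real.log (r * p.1)) • p.2) :=
  (((radAux_mono hR hmono hconv).measurable).comp
    ((Real.measurable_log.comp (measurable_fst.const_mul r)).neg)).smul measurable_snd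

end SliceAux


open SliceAux

theorem statement0 (d : ℕ) (hd : 0 < d) (R : ℝ≥0∞) (hR : 0 < R) (φ : ℝ → ℝ)
    (hmono : StrictMonoOn φ (phiDom R)) (hconv : ConvexOn ℝ (phiDom R) φ)
    (hint : IntegrableOn (fun x : Euc d => Real.exp (-φ ‖x‖)) (openBall d R))
    (x y : Euc d) (hx : x ∈ openBall d R) (hy : y ∈ openBall d R) :
    wassersteinDist
        (sliceKernel (openBall d R) (fun z => Real.exp (-φ ‖z‖)) x)
        (sliceKernel (openBall d R) (fun z => Real.exp (-φ ‖z‖)) y)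
      ≤ ENNReal.ofReal ((1 - 1/((d : ℝ) + 1)) * |‖x‖ - ‖y‖|) := by
  classical
  haveI : Nonempty (Fin d) := ⟨⟨0, hd⟩⟩
  set V := volume (ball (0 : Euc d) 1) with hV
  have hV0 : V ≠ 0 := (measure_ball_pos volume 0 one_pos).ne'
  have hVtop : V ≠ ⊤ := measure_ball_lt_top.ne
  set ν : Measure (Euc d) := V⁻¹ • volume.restrict (ball (0 : Euc d) 1) with hν
  haveI : IsFiniteMeasure ν := by
    constructor
    rw [hν, Measure.smul_apply, Measure.restrict_apply_univ, smul_eq_mul,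
      ENNReal.inv_mul_cancel hV0 hVtop]
    exact one_lt_top
  set μ₀ : Measure (ℝ × Euc d) := (volume.restrict (Ioc (0:ℝ) 1)).prod ν with hμ₀
  set ρx := Real.exp (-φ ‖x‖) with hρx
  set ρy := Real.exp (-φ ‖y‖) with hρy
  set gx : ℝ × Euc d → Euc d := fun p => radAux R φ (-Real.log (ρx * p.1)) • p.2 with hgxdef
  set gy : ℝ × Euc d → Euc d := fun p => radAux R φ (-Real.log (ρy * p.1)) • p.2 with hgydef
  have hgx : Measurable gx := measurable_g hR hmono hconv ρx
  have hgy : Measurable gy := measurable_g hR hmono hconv ρy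
  set γ : Measure (Euc d × Euc d) := Measure.map (fun p => (gx p, gy p)) μ₀ with hγ
  have hmargx : Measure.map Prod.fst γ
      = sliceKernel (openBall d R) (fun z => Real.exp (-φ ‖z‖)) x := by
    rw [hγ, Measure.map_map measurable_fst (hgx.prodMk hgy)]
    exact map_eq_sliceKernel hd hR hmono hconv hx
  have hmargy : Measure.map Prod.snd γ
      = sliceKernel (openBall d R) (fun z => Real.exp (-φ ‖z‖)) y := by
    rw [hγ, Measure.map_map measurable_snd (hgx.prodMk hgy)]
    exact map_eq_sliceKernel hd hR hmono hconv hy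
  have hstep : wassersteinDist
      (sliceKernel (openBall d R) (fun z => Real.exp (-φ ‖z‖)) x)
      (sliceKernel (openBall d R) (fun z => Real.exp (-φ ‖z‖)) y)
      ≤ ∫⁻ p, edist p.1 p.2 ∂γ := by
    exact iInf₂_le γ ⟨hmargx, hmargy⟩
  refine le_trans hstep ?_
  rw [hγ, lintegral_map (measurable_fst.edist measurable_snd) (hgx.prodMk hgy)]
  set Δ := |‖x‖ - ‖y‖| with hΔ
  have hΔ0 : 0 ≤ Δ := abs_nonneg _
  -- a.e. the first coordinate is in Ioo 0 1
  have hnull : μ₀ {p : ℝ × Euc d | p.1 ∉ Ioo (0:ℝ) 1} = 0 := by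
    have hset : {p : ℝ × Euc d | p.1 ∉ Ioo (0:ℝ) 1} = (Ioo (0:ℝ) 1)ᶜ ×ˢ univ := by
      ext p; simp [mem_prod]
    rw [hset, hμ₀, Measure.prod_prod]
    have h1 : (volume.restrict (Ioc (0:ℝ) 1)) (Ioo (0:ℝ) 1)ᶜ = 0 := by
      rw [Measure.restrict_apply measurableSet_Ioo.compl]
      refine measure_mono_null (?_ : _ ⊆ ({1} : Set ℝ)) Real.volume_singleton
      rintro u ⟨hu1, hu2⟩
      simp only [mem_compl_iff, mem_Ioo, not_and, not_lt] at hu1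
      have : u = 1 := le_antisymm hu2.2 (hu1 hu2.1)
      simp [this]
    rw [h1, zero_mul]
  have hae : ∀ᵐ p ∂μ₀, p.1 ∈ Ioo (0:ℝ) 1 := by
    have := measure_eq_zero_iff_ae_notMem.1 hnull
    filter_upwards [this] with p hp
    simpa using hp
  have hxdom : ‖x‖ ∈ phiDom R := mem_openBall_iff.1 hx
  have hydom : ‖y‖ ∈ phiDom R := mem_openBall_iff.1 hy
  have hbound : ∀ᵐ p ∂μ₀, edist (gx p) (gy p)
      ≤ ENNReal.ofReal Δ * ENNReal.ofReal ‖p.2‖ := by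
    filter_upwards [hae] with p hp
    obtain ⟨hu0, hu1⟩ := hp
    set u := p.1
    set z := p.2
    have hlogx : -Real.log (ρx * u) = (-Real.log u) + φ ‖x‖ := by
      rw [hρx, Real.log_mul (Real.exp_pos _).ne' hu0.ne', Real.log_exp]
      ring
    have hlogy : -Real.log (ρy * u) = (-Real.log u) + φ ‖y‖ := by
      rw [hρy, Real.log_mul (Real.exp_pos _).ne' hu0.ne', Real.log_exp]
      ring
    have hc : 0 ≤ -Real.log u := by
      have := Real.log_nonpos hu0.le hu1.le
      linarith
    have habs : |radAux R φ (-Real.log (ρx * u)) - radAux R φ (-Real.log (ρy * u))| ≤ Δ := by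
      rw [hlogx, hlogy]
      exact abs_radAux_sub hR hmono hconv hxdom hydom hc
    have hdist : edist (gx p) (gy p)
        = ENNReal.ofReal (|radAux R φ (-Real.log (ρx * u)) - radAux R φ (-Real.log (ρy * u))| * ‖z‖) := by
      rw [edist_dist, dist_eq_norm]
      congr 1
      rw [hgxdef, hgydef]
      show ‖radAux R φ (-Real.log (ρx * u)) • z - radAux R φ (-Real.log (ρy * u)) • z‖ = _
      rw [← sub_smul, norm_smul, Real.norm_eq_abs]
    rw [hdist, ← ENNReal.ofReal_mul hΔ0]
    exact ENNReal.ofReal_le_ofReal (mul_le_mul_of_nonneg_right habs (norm_nonneg z))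
  refine le_trans (lintegral_mono_ae hbound) ?_
  have hsplit : ∫⁻ p, ENNReal.ofReal Δ * ENNReal.ofReal ‖p.2‖ ∂μ₀
      = (∫⁻ u in Ioc (0:ℝ) 1, ENNReal.ofReal Δ) * ∫⁻ z, ENNReal.ofReal ‖z‖ ∂ν := by
    rw [hμ₀]
    exact lintegral_prod_mul aemeasurable_const
      (measurable_norm.ennreal_ofReal.aemeasurable)
  rw [hsplit]
  have hfst : (∫⁻ u in Ioc (0:ℝ) 1, ENNReal.ofReal Δ) = ENNReal.ofReal Δ := by
    rw [lintegral_const, Measure.restrict_apply_univ, Real.volume_Ioc]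
    simp
  have hsnd : ∫⁻ z, ENNReal.ofReal ‖z‖ ∂ν = ENNReal.ofReal ((d : ℝ) / ((d : ℝ) + 1)) := by
    rw [hν, lintegral_smul_measure, lintegral_norm_ball hd, ← hV, mul_comm (ENNReal.ofReal _) V,
      smul_eq_mul, ← mul_assoc, ENNReal.inv_mul_cancel hV0 hVtop, one_mul]
  rw [hfst, hsnd, ← ENNReal.ofReal_mul hΔ0]
  apply ENNReal.ofReal_le_ofReal
  have hkey : (d : ℝ) / ((d : ℝ) + 1) = 1 - 1 / ((d : ℝ) + 1) := by
    have : ((d : ℝ) + 1) ≠ 0 := by positivity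
    field_simp
    ring
  rw [hkey, mul_comm]
end
end

section
/- Let R ∈ (0,∞], let φ : [0,R) → ℝ be strictly increasing and convex, and define ρ : B̊_R^{(d)} → (0,∞) by ρ(x) = exp(−φ(|x|)), assumed Lebesgue-integrable. Then for all x, y ∈ B̊_R^{(d)}, W(U_ρ(x,·), U_ρ(y,·)) ≤ (d/(d+1)) · λ_d(B_1^{(d)})^{−1/d} · ∫_0^1 | ℓ_ρ(r ρ(x))^{1/d} − ℓ_ρ(r ρ(y))^{1/d} | dr, where ℓ_ρ(t) = λ_d(G(t)) is the level-set function of ρ. -/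
open MeasureTheory Set ENNReal Filter

noncomputable section

namespace SliceAux

variable {R : ℝ≥0∞} {φ : ℝ → ℝ} {d : ℕ}

def lev (R : ℝ≥0∞) (φ : ℝ → ℝ) (c : ℝ) : Set ℝ := {u | u ∈ phiDom R ∧ φ u ≤ c}

def sig (R : ℝ≥0∞) (φ : ℝ → ℝ) (c : ℝ) : ℝ := sSup (lev R φ c)

lemma zero_mem_phiDom (hR : 0 < R) : (0:ℝ) ∈ phiDom R := by
  refine ⟨le_refl 0, by simpa using hR⟩

lemma phiDom_convex : Convex ℝ (phiDom R) := by
  intro s1 h1 s2 h2 a b ha hb hab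
  simp only [smul_eq_mul]
  constructor
  · have := h1.1; have := h2.1; positivity
  · rcases le_total s1 s2 with h | h
    · refine lt_of_le_of_lt ?_ h2.2
      apply ENNReal.ofReal_le_ofReal
      calc a * s1 + b * s2 ≤ a * s2 + b * s2 := by
            nlinarith [mul_le_mul_of_nonneg_left h ha]
        _ = s2 := by rw [← add_mul, hab, one_mul]
    · refine lt_of_le_of_lt ?_ h1.2
      apply ENNReal.ofReal_le_ofReal
      calc a * s1 + b * s2 ≤ a * s1 + b * s1 := by
            nlinarith [mul_le_mul_of_nonneg_left h hb]
        _ = s1 := by rw [← add_mul, hab, one_mul]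

lemma one_mem_phiDom_top (hRtop : R = ⊤) : (1:ℝ) ∈ phiDom R := by
  refine ⟨zero_le_one, by simp [hRtop]⟩

lemma bddAbove_lev (hR : 0 < R) (hmono : StrictMonoOn φ (phiDom R))
    (hconv : ConvexOn ℝ (phiDom R) φ) (c : ℝ) : BddAbove (lev R φ c) := by
  rcases eq_or_ne R ⊤ with hRtop | hRtop
  · have h0 : (0:ℝ) ∈ phiDom R := zero_mem_phiDom hR
    have h1 : (1:ℝ) ∈ phiDom R := one_mem_phiDom_top hRtop
    have hm : 0 < φ 1 - φ 0 := by
      have := hmono h0 h1 one_pos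
      linarith
    refine ⟨max 1 (1 + (c - φ 1) / (φ 1 - φ 0)), ?_⟩
    rintro u ⟨hu, hφu⟩
    rcases le_total u 1 with h | h
    · exact le_max_of_le_left h
    · refine le_max_of_le_right ?_
      have hupos : (0:ℝ) < u := by linarith
      have hcomb : φ ((1 - 1/u) • (0:ℝ) + (1/u) • u) ≤ (1 - 1/u) • φ 0 + (1/u) • φ u :=
        hconv.2 h0 hu (sub_nonneg.2 (div_le_one_of_le₀ h hupos.le)) (by positivity) (by ring)
      have harg : (1 - 1/u) • (0:ℝ) + (1/u) • u = 1 := by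
        simp only [smul_eq_mul, mul_zero, zero_add]
        field_simp
      rw [harg] at hcomb
      simp only [smul_eq_mul] at hcomb
      rw [← sub_le_iff_le_add', le_div_iff₀ hm]
      have hcomb' : u * φ 1 ≤ (u - 1) * φ 0 + φ u := by
        calc u * φ 1 ≤ u * ((1 - 1/u) * φ 0 + 1/u * φ u) :=
              mul_le_mul_of_nonneg_left hcomb hupos.le
          _ = (u - 1) * φ 0 + φ u := by field_simp
      nlinarith [hcomb', hφu]
  · refine ⟨R.toReal, ?_⟩
    rintro u ⟨⟨hu0, huR⟩, -⟩
    have := ENNReal.toReal_mono hRtop huR.le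
    rwa [ENNReal.toReal_ofReal hu0] at this

lemma sig_nonneg (hR : 0 < R) (hmono : StrictMonoOn φ (phiDom R))
    (hconv : ConvexOn ℝ (phiDom R) φ) {c : ℝ} (hc : φ 0 ≤ c) : 0 ≤ sig R φ c :=
  le_csSup (bddAbove_lev hR hmono hconv c) ⟨zero_mem_phiDom hR, hc⟩

lemma sig_mono (hR : 0 < R) (hmono : StrictMonoOn φ (phiDom R))
    (hconv : ConvexOn ℝ (phiDom R) φ) : Monotone (sig R φ) := by
  intro c c' hcc
  rcases (lev R φ c).eq_empty_or_nonempty with he | hne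
  · rw [sig, he, Real.sSup_empty]
    rcases (lev R φ c').eq_empty_or_nonempty with he' | hne'
    · rw [sig, he', Real.sSup_empty]
    · obtain ⟨u, hu⟩ := hne'
      exact le_trans hu.1.1 (le_csSup (bddAbove_lev hR hmono hconv c') hu)
  · exact csSup_le_csSup (bddAbove_lev hR hmono hconv c') hne
      (fun u hu => ⟨hu.1, hu.2.trans hcc⟩)

lemma sig_pos (hR : 0 < R) (hmono : StrictMonoOn φ (phiDom R))
    (hconv : ConvexOn ℝ (phiDom R) φ) {c : ℝ} (hc : φ 0 < c) : 0 < sig R φ c := by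
  obtain ⟨u, hu0, hudom, huφ⟩ : ∃ u : ℝ, 0 < u ∧ u ∈ phiDom R ∧ φ u ≤ c := by
    obtain ⟨u1, hu1pos, hu1⟩ : ∃ u1 : ℝ, 0 < u1 ∧ u1 ∈ phiDom R := by
      rcases eq_or_ne R ⊤ with hRtop | hRtop
      · exact ⟨1, one_pos, zero_le_one, by simp [hRtop]⟩
      · refine ⟨R.toReal / 2, ?_, ?_, ?_⟩
        · have : 0 < R.toReal := ENNReal.toReal_pos hR.ne' hRtop
          linarith
        · have : 0 < R.toReal := ENNReal.toReal_pos hR.ne' hRtop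
          linarith
        · calc ENNReal.ofReal (R.toReal / 2) < ENNReal.ofReal R.toReal := by
                apply ENNReal.ofReal_lt_ofReal_iff_of_nonneg (by positivity) |>.2
                have : 0 < R.toReal := ENNReal.toReal_pos hR.ne' hRtop
                linarith
            _ = R := ENNReal.ofReal_toReal hRtop
    set θ : ℝ := min 1 ((c - φ 0) / (|φ u1 - φ 0| + 1)) with hθdef
    have hθpos : 0 < θ := lt_min one_pos (div_pos (by linarith) (by positivity))
    have hθ1 : θ ≤ 1 := min_le_left _ _
    have h0 : (0:ℝ) ∈ phiDom R := ⟨le_refl 0, by simpa using hR⟩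
    refine ⟨θ * u1, by positivity, ⟨by positivity, ?_⟩, ?_⟩
    · refine lt_of_le_of_lt ?_ hu1.2
      apply ENNReal.ofReal_le_ofReal
      nlinarith
    · have hcomb : φ ((1 - θ) • (0:ℝ) + θ • u1) ≤ (1 - θ) • φ 0 + θ • φ u1 :=
        hconv.2 h0 hu1 (by linarith) hθpos.le (by ring)
      simp only [smul_eq_mul, mul_zero, zero_add] at hcomb
      have hkey : θ * |φ u1 - φ 0| < c - φ 0 := by
        have hθle : θ ≤ (c - φ 0) / (|φ u1 - φ 0| + 1) := min_le_right _ _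
        have habs : (0:ℝ) ≤ |φ u1 - φ 0| := abs_nonneg _
        have h2 : θ * (|φ u1 - φ 0| + 1) ≤ c - φ 0 := by
          rw [← le_div_iff₀ (by positivity)]
          exact hθle
        nlinarith
      have : θ * (φ u1 - φ 0) ≤ θ * |φ u1 - φ 0| :=
        mul_le_mul_of_nonneg_left (le_abs_self _) hθpos.le
      nlinarith
  exact lt_of_lt_of_le hu0 (le_csSup (bddAbove_lev hR hmono hconv c) ⟨hudom, huφ⟩)

lemma sig_comb (hR : 0 < R) (hmono : StrictMonoOn φ (phiDom R))
    (hconv : ConvexOn ℝ (phiDom R) φ) {p q θ : ℝ} (hp : φ 0 ≤ p) (hq : φ 0 ≤ q)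
    (hθ0 : 0 ≤ θ) (hθ1 : θ ≤ 1) :
    (1 - θ) * sig R φ p + θ * sig R φ q ≤ sig R φ ((1 - θ) * p + θ * q) := by
  have h0 : (0:ℝ) ∈ phiDom R := zero_mem_phiDom hR
  apply _root_.le_of_forall_pos_le_add
  intro ε hε
  obtain ⟨u, huA, hu⟩ := exists_lt_of_lt_csSup (s := lev R φ p)
    ⟨0, h0, hp⟩ (sub_lt_self _ hε)
  obtain ⟨v, hvA, hv⟩ := exists_lt_of_lt_csSup (s := lev R φ q)
    ⟨0, h0, hq⟩ (sub_lt_self _ hε)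
  have hwdom : (1 - θ) • u + θ • v ∈ phiDom R :=
    phiDom_convex huA.1 hvA.1 (by linarith) hθ0 (by ring)
  have hwφ : φ ((1 - θ) • u + θ • v) ≤ (1 - θ) • φ u + θ • φ v :=
    hconv.2 huA.1 hvA.1 (by linarith) hθ0 (by ring)
  have hwA : (1 - θ) * u + θ * v ∈ lev R φ ((1 - θ) * p + θ * q) := by
    refine ⟨by simpa using hwdom, ?_⟩
    have h1 : (1 - θ) * φ u ≤ (1 - θ) * p := mul_le_mul_of_nonneg_left huA.2 (by linarith)
    have h2 : θ * φ v ≤ θ * q := mul_le_mul_of_nonneg_left hvA.2 hθ0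
    simp only [smul_eq_mul] at hwφ
    linarith
  have hle := le_csSup (bddAbove_lev hR hmono hconv _) hwA
  have h1 : (1 - θ) * sig R φ p ≤ (1 - θ) * u + (1 - θ) * ε := by
    have hup : sig R φ p ≤ u + ε := by
      have : sSup (lev R φ p) - ε < u := hu
      rw [sig]; linarith
    nlinarith [mul_le_mul_of_nonneg_left hup (show (0:ℝ) ≤ 1 - θ by linarith)]
  have h2 : θ * sig R φ q ≤ θ * v + θ * ε := by
    have hvq : sig R φ q ≤ v + ε := by
      have : sSup (lev R φ q) - ε < v := hv
      rw [sig]; linarith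
    nlinarith [mul_le_mul_of_nonneg_left hvq hθ0]
  have hle' : (1 - θ) * u + θ * v ≤ sig R φ ((1 - θ) * p + θ * q) := hle
  linarith

lemma sig_incr (hR : 0 < R) (hmono : StrictMonoOn φ (phiDom R))
    (hconv : ConvexOn ℝ (phiDom R) φ) {c1 c2 Δ : ℝ} (h0 : φ 0 ≤ c1) (h12 : c1 ≤ c2)
    (hΔ : 0 ≤ Δ) : sig R φ (c2 + Δ) - sig R φ c2 ≤ sig R φ (c1 + Δ) - sig R φ c1 := by
  set T := c2 + Δ - c1 with hT
  rcases eq_or_lt_of_le (show (0:ℝ) ≤ T by rw [hT]; linarith) with hT0 | hT0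
  · have h1 : c1 = c2 := by linarith [hT0]
    have h2 : Δ = 0 := by rw [hT] at hT0; linarith
    rw [h1, h2]
  · set θ := Δ / T with hθ
    have hθ0 : 0 ≤ θ := div_nonneg hΔ hT0.le
    have hθ1 : θ ≤ 1 := by
      rw [div_le_one hT0]; linarith
    have hθT : θ * T = Δ := div_mul_cancel₀ Δ hT0.ne'
    have e1 : (1 - θ) * c1 + θ * (c2 + Δ) = c1 + Δ := by
      have : (1 - θ) * c1 + θ * (c2 + Δ) = c1 + θ * T := by rw [hT]; ring
      rw [this, hθT]
    have e2 : (1 - (1 - θ)) * c1 + (1 - θ) * (c2 + Δ) = c2 := by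
      have : (1 - (1 - θ)) * c1 + (1 - θ) * (c2 + Δ) = c1 + T - θ * T := by rw [hT]; ring
      rw [this, hθT, hT]; ring
    have hq : φ 0 ≤ c2 + Δ := by linarith
    have k1 := sig_comb hR hmono hconv h0 hq hθ0 hθ1
    have k2 := sig_comb hR hmono hconv (θ := 1 - θ) h0 hq (by linarith) (by linarith)
    rw [e1] at k1
    rw [e2] at k2
    linarith

lemma sig_bound (hR : 0 < R) (hmono : StrictMonoOn φ (phiDom R))
    (hconv : ConvexOn ℝ (phiDom R) φ) {cx cy v : ℝ} (h0x : φ 0 ≤ cx) (h0y : φ 0 ≤ cy)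
    (hv : 0 ≤ v) :
    |sig R φ (cx + v) - sig R φ (cy + v)| ≤ |sig R φ cx - sig R φ cy| := by
  have key : ∀ cx cy : ℝ, φ 0 ≤ cx → φ 0 ≤ cy → cy ≤ cx →
      |sig R φ (cx + v) - sig R φ (cy + v)| ≤ |sig R φ cx - sig R φ cy| := by
    intro cx cy h0x h0y hyx
    have h1 := sig_incr hR hmono hconv h0y (show cy ≤ cy + v by linarith)
      (show 0 ≤ cx - cy by linarith)
    have e1 : cy + v + (cx - cy) = cx + v := by ring
    have e2 : cy + (cx - cy) = cx := by ring
    rw [e1, e2] at h1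
    have m1 : sig R φ (cy + v) ≤ sig R φ (cx + v) :=
      sig_mono hR hmono hconv (by linarith)
    have m2 : sig R φ cy ≤ sig R φ cx := sig_mono hR hmono hconv hyx
    rw [abs_of_nonneg (by linarith), abs_of_nonneg (by linarith)]
    linarith
  rcases le_total cy cx with h | h
  · exact key cx cy h0x h0y h
  · rw [abs_sub_comm, abs_sub_comm (sig R φ cx)]
    exact key cy cx h0y h0x h

lemma mem_phiDom_norm {x : Euc d} (hx : x ∈ openBall d R) : ‖x‖ ∈ phiDom R := by
  refine ⟨norm_nonneg x, ?_⟩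
  rw [ofReal_norm]
  exact hx

lemma phi_zero_le (hR : 0 < R) (hmono : StrictMonoOn φ (phiDom R)) {x : Euc d}
    (hx : x ∈ openBall d R) : φ 0 ≤ φ ‖x‖ := by
  rcases eq_or_lt_of_le (norm_nonneg x) with h | h
  · rw [← h]
  · exact (hmono ⟨le_refl 0, by simpa using hR⟩ (mem_phiDom_norm hx) h).le

lemma ball_subset_levelSet (hR : 0 < R) (hmono : StrictMonoOn φ (phiDom R))
    (hconv : ConvexOn ℝ (phiDom R) φ) {c : ℝ} (hc : φ 0 ≤ c) :
    Metric.ball (0 : Euc d) (sig R φ c) ⊆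
      levelSet (openBall d R) (fun z => Real.exp (-φ ‖z‖)) (Real.exp (-c)) := by
  intro z hz
  rw [Metric.mem_ball, dist_zero_right] at hz
  obtain ⟨u, huA, hu⟩ := exists_lt_of_lt_csSup (s := lev R φ c)
    ⟨0, ⟨le_refl 0, by simpa using hR⟩, hc⟩ hz
  have hzdom : ‖z‖ ∈ phiDom R :=
    ⟨norm_nonneg z, lt_of_le_of_lt (ENNReal.ofReal_le_ofReal hu.le) huA.1.2⟩
  refine ⟨?_, ?_⟩
  · show (‖z‖₊ : ℝ≥0∞) < R
    rw [← enorm_eq_nnnorm, ← ofReal_norm]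
    exact lt_of_le_of_lt (ENNReal.ofReal_le_ofReal hu.le) huA.1.2
  · have : φ ‖z‖ ≤ c := le_trans (hmono hzdom huA.1 hu).le huA.2
    exact Real.exp_le_exp.2 (by linarith)

lemma levelSet_subset_closedBall (hR : 0 < R) (hmono : StrictMonoOn φ (phiDom R))
    (hconv : ConvexOn ℝ (phiDom R) φ) {c : ℝ} :
    levelSet (openBall d R) (fun z => Real.exp (-φ ‖z‖)) (Real.exp (-c)) ⊆
      Metric.closedBall (0 : Euc d) (sig R φ c) := by
  rintro z ⟨hzG, hz⟩
  rw [Metric.mem_closedBall, dist_zero_right]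
  refine le_csSup (bddAbove_lev hR hmono hconv c) ⟨⟨norm_nonneg z, ?_⟩, ?_⟩
  · rw [ofReal_norm]; exact hzG
  · have := Real.exp_le_exp.1 hz
    linarith

lemma levelSet_ae_ball (hd : 0 < d) (hR : 0 < R) (hmono : StrictMonoOn φ (phiDom R))
    (hconv : ConvexOn ℝ (phiDom R) φ) {c : ℝ} (hc : φ 0 ≤ c) :
    levelSet (openBall d R) (fun z => Real.exp (-φ ‖z‖)) (Real.exp (-c))
      =ᵐ[volume] Metric.ball (0 : Euc d) (sig R φ c) := by
  haveI : Nontrivial (Euc d) :=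
    Module.nontrivial_of_finrank_pos (R := ℝ) (by rwa [finrank_euclideanSpace_fin])
  rw [MeasureTheory.ae_eq_set]
  constructor
  · apply measure_mono_null (t := Metric.sphere (0 : Euc d) (sig R φ c))
    · intro z hz
      have h1 := levelSet_subset_closedBall hR hmono hconv (c := c) hz.1
      have h2 : z ∉ Metric.ball (0 : Euc d) (sig R φ c) := hz.2
      rw [Metric.mem_closedBall, dist_zero_right] at h1
      rw [Metric.mem_ball, dist_zero_right, not_lt] at h2
      simp [Metric.mem_sphere, dist_zero_right]
      linarith
    · exact Measure.addHaar_sphere volume _ _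
  · rw [diff_eq_empty.2 (ball_subset_levelSet hR hmono hconv hc)]
    exact measure_empty

lemma levelSet_volume (hd : 0 < d) (hR : 0 < R) (hmono : StrictMonoOn φ (phiDom R))
    (hconv : ConvexOn ℝ (phiDom R) φ) {c : ℝ} (hc : φ 0 ≤ c) :
    volume (levelSet (openBall d R) (fun z => Real.exp (-φ ‖z‖)) (Real.exp (-c)))
      = ENNReal.ofReal (sig R φ c ^ d) * volume (Metric.ball (0 : Euc d) 1) := by
  haveI : Nontrivial (Euc d) :=
    Module.nontrivial_of_finrank_pos (R := ℝ) (by rwa [finrank_euclideanSpace_fin])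
  rw [measure_congr (levelSet_ae_ball hd hR hmono hconv hc),
    Measure.addHaar_ball volume _ (sig_nonneg hR hmono hconv hc),
    finrank_euclideanSpace_fin]

lemma levelSet_anti {G : Set (Euc d)} {ρ : Euc d → ℝ} :
    Antitone (fun t => levelSet G ρ t) := fun _ _ h _ hz => ⟨hz.1, le_trans h hz.2⟩

lemma lintegral_Ioc_scale {β : ℝ} (hβ : 0 < β) {g : ℝ → ℝ≥0∞} (hg : Measurable g) :
    ∫⁻ t in Ioc (0:ℝ) β, g t = ENNReal.ofReal β * ∫⁻ r in Ioc (0:ℝ) 1, g (β * r) := by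
  have hmeas : Measurable fun r : ℝ => β * r := measurable_const_mul β
  have hpre : (fun r : ℝ => β * r) ⁻¹' Ioc 0 β = Ioc 0 1 := by
    ext r
    simp only [mem_preimage, mem_Ioc]
    constructor
    · rintro ⟨h1, h2⟩
      constructor
      · by_contra hr
        push_neg at hr
        nlinarith
      · nlinarith
    · rintro ⟨h1, h2⟩
      exact ⟨by positivity, by nlinarith⟩
  have key : volume.restrict (Ioc (0:ℝ) β)
      = ENNReal.ofReal β • Measure.map (fun r => β * r) (volume.restrict (Ioc (0:ℝ) 1)) := by
    rw [← hpre, ← Measure.restrict_map hmeas measurableSet_Ioc,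
      Real.map_volume_mul_left hβ.ne', Measure.restrict_smul, smul_smul,
      ← ENNReal.ofReal_mul hβ.le, abs_of_pos (by positivity), mul_inv_cancel₀ hβ.ne',
      ENNReal.ofReal_one, one_smul]
  rw [key, lintegral_smul_measure, lintegral_map hg hmeas, smul_eq_mul]

lemma moment_ball (hd : 0 < d) :
    ∫⁻ z in Metric.ball (0:Euc d) 1, ENNReal.ofReal ‖z‖
      = volume (Metric.ball (0:Euc d) 1) * ENNReal.ofReal (d / (d+1)) := by
  haveI : Nontrivial (Euc d) :=
    Module.nontrivial_of_finrank_pos (R := ℝ) (by rwa [finrank_euclideanSpace_fin])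
  set c := volume (Metric.ball (0:Euc d) 1) with hc
  have hcne : c ≠ ⊤ := (measure_ball_lt_top).ne
  rw [lintegral_eq_lintegral_meas_lt _ (ae_of_all _ fun z => norm_nonneg z)
    measurable_norm.aemeasurable]
  have hsplit : (Ioi (0:ℝ)) = Ioo 0 1 ∪ Ici 1 := by
    ext t; simp only [mem_Ioi, mem_union, mem_Ioo, mem_Ici]
    constructor
    · intro h; rcases lt_or_ge t 1 with h1 | h1
      · exact Or.inl ⟨h, h1⟩
      · exact Or.inr h1
    · rintro (⟨h, _⟩ | h) <;> linarith
  rw [hsplit, lintegral_union measurableSet_Ici (by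
    rw [disjoint_iff_inter_eq_empty]; ext t
    simp only [mem_inter_iff, mem_Ioo, mem_Ici, mem_empty_iff_false, iff_false, not_and]
    rintro ⟨_, h1⟩ h2; linarith)]
  have h1 : ∫⁻ t in Ici (1:ℝ), (volume.restrict (Metric.ball (0:Euc d) 1)) {z | t < ‖z‖} = 0 := by
    rw [setLIntegral_congr_fun_ae measurableSet_Ici (ae_of_all _ (fun t (ht : 1 ≤ t) => ?_)),
      lintegral_zero]
    rw [Measure.restrict_apply (by
      exact measurableSet_lt measurable_const measurable_norm)]
    convert measure_empty (μ := volume)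
    ext z
    simp only [mem_inter_iff, mem_setOf_eq, Metric.mem_ball, dist_zero_right,
      mem_empty_iff_false, iff_false, not_and]
    intro h h2; linarith
  rw [h1, add_zero]
  have h2 : ∀ t ∈ Ioo (0:ℝ) 1,
      (volume.restrict (Metric.ball (0:Euc d) 1)) {z | t < ‖z‖}
        = c - ENNReal.ofReal (t ^ d) * c := by
    intro t ht
    rw [Measure.restrict_apply (measurableSet_lt measurable_const measurable_norm)]
    have hset : {z : Euc d | t < ‖z‖} ∩ Metric.ball 0 1
        = Metric.ball (0:Euc d) 1 \ Metric.closedBall 0 t := by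
      ext z
      simp only [mem_inter_iff, mem_setOf_eq, Metric.mem_ball, dist_zero_right, mem_diff,
        Metric.mem_closedBall, not_le]
      tauto
    rw [hset, measure_diff (Metric.closedBall_subset_ball ht.2)
      measurableSet_closedBall.nullMeasurableSet measure_closedBall_lt_top.ne,
      Measure.addHaar_closedBall volume _ ht.1.le, finrank_euclideanSpace_fin]
  rw [setLIntegral_congr_fun_ae measurableSet_Ioo (ae_of_all _ h2)]
  have h3 : ∀ t ∈ Ioo (0:ℝ) 1, c - ENNReal.ofReal (t ^ d) * c
      = ENNReal.ofReal (1 - t ^ d) * c := by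
    intro t ht
    nth_rewrite 1 [← one_mul c]
    rw [← ENNReal.sub_mul (fun _ _ => hcne)]
    congr 1
    rw [ENNReal.ofReal_sub _ (pow_nonneg ht.1.le d), ENNReal.ofReal_one]
  rw [setLIntegral_congr_fun_ae measurableSet_Ioo (ae_of_all _ h3),
    lintegral_mul_const'' _ (by
      exact (Measurable.ennreal_ofReal (by fun_prop)).aemeasurable)]
  have h4 : ∫⁻ t in Ioo (0:ℝ) 1, ENNReal.ofReal (1 - t ^ d)
      = ENNReal.ofReal (d / (d+1)) := by
    rw [← ofReal_integral_eq_lintegral_ofReal]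
    · congr 1
      rw [setIntegral_congr_set Ioo_ae_eq_Ioc, ← intervalIntegral.integral_of_le zero_le_one,
        intervalIntegral.integral_sub intervalIntegrable_const
          (intervalIntegral.intervalIntegrable_pow d),
        intervalIntegral.integral_const, integral_pow]
      field_simp
      norm_num
    · apply (integrable_const (1:ℝ)).mono'
        ((Measurable.aestronglyMeasurable (f := fun t : ℝ => 1 - t ^ d) (by fun_prop)))
      apply (ae_restrict_iff' measurableSet_Ioo).2 (ae_of_all _ ?_)
      rintro t ⟨h0, h1⟩
      rw [Real.norm_eq_abs, abs_le]
      constructor <;> nlinarith [pow_nonneg h0.le d, pow_le_one₀ h0.le h1.le (n := d)]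
    · apply (ae_restrict_iff' measurableSet_Ioo).2 (ae_of_all _ ?_)
      rintro t ⟨h0, h1⟩
      simp only [Pi.zero_apply]
      nlinarith [pow_le_one₀ h0.le h1.le (n := d)]
  rw [h4, mul_comm]

lemma key_int (hd : 0 < d) (hR : 0 < R) (hmono : StrictMonoOn φ (phiDom R))
    (hconv : ConvexOn ℝ (phiDom R) φ) {c : ℝ} (hc : φ 0 ≤ c) (hσ : 0 < sig R φ c)
    {A : Set (Euc d)} :
    (volume (levelSet (openBall d R) (fun z => Real.exp (-φ ‖z‖)) (Real.exp (-c))))⁻¹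
        * volume (A ∩ levelSet (openBall d R) (fun z => Real.exp (-φ ‖z‖)) (Real.exp (-c)))
      = (volume (Metric.ball (0:Euc d) 1))⁻¹
        * volume ((fun z : Euc d => sig R φ c • z) ⁻¹' A ∩ Metric.ball 0 1) := by
  haveI : Nontrivial (Euc d) :=
    Module.nontrivial_of_finrank_pos (R := ℝ) (by rwa [finrank_euclideanSpace_fin])
  set s := sig R φ c with hs
  set cB := volume (Metric.ball (0:Euc d) 1) with hcB
  have hcB0 : cB ≠ 0 := (Metric.measure_ball_pos volume _ one_pos).ne'
  have hcBtop : cB ≠ ⊤ := measure_ball_lt_top.ne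
  have h1 : volume (A ∩ levelSet (openBall d R) (fun z => Real.exp (-φ ‖z‖)) (Real.exp (-c)))
      = volume (A ∩ Metric.ball 0 s) :=
    measure_congr (ae_eq_set_inter (ae_eq_refl A) (levelSet_ae_ball hd hR hmono hconv hc))
  have hpre : (fun z : Euc d => s • z) ⁻¹' (Metric.ball 0 s) = Metric.ball 0 1 := by
    ext z
    simp only [mem_preimage, mem_ball_zero_iff, norm_smul, Real.norm_eq_abs, abs_of_pos hσ]
    constructor
    · intro h; nlinarith
    · intro h; nlinarith
  have h2 : (fun z : Euc d => s • z) ⁻¹' A ∩ Metric.ball 0 1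
      = (fun z : Euc d => s • z) ⁻¹' (A ∩ Metric.ball 0 s) := by
    rw [preimage_inter, hpre]
  have h3 : volume ((fun z : Euc d => s • z) ⁻¹' (A ∩ Metric.ball 0 s))
      = ENNReal.ofReal ((s ^ d)⁻¹) * volume (A ∩ Metric.ball 0 s) := by
    rw [preimage_smul₀ hσ.ne', Measure.addHaar_smul, finrank_euclideanSpace_fin,
      inv_pow, abs_of_pos (by positivity)]
  rw [levelSet_volume hd hR hmono hconv hc, h1, h2, h3, ← hcB,
    ENNReal.mul_inv (Or.inl (ENNReal.ofReal_pos.2 (by positivity)).ne')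
      (Or.inl ENNReal.ofReal_ne_top),
    ENNReal.ofReal_inv_of_pos (by positivity)]
  ring

lemma measSliceFn {G : Set (Euc d)} {ρ : Euc d → ℝ} {A : Set (Euc d)} :
    Measurable (fun t : ℝ =>
      (volume (levelSet G ρ t))⁻¹ * volume (A ∩ levelSet G ρ t)) := by
  apply Measurable.mul
  · exact (Antitone.measurable (fun t1 t2 h => measure_mono (levelSet_anti h))).inv
  · exact Antitone.measurable (fun t1 t2 h =>
      measure_mono (inter_subset_inter_right _ (levelSet_anti h)))

lemma measUnif {G : Set (Euc d)} {ρ : Euc d → ℝ} :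
    Measurable (fun t : ℝ =>
      (volume (levelSet G ρ t))⁻¹ • volume.restrict (levelSet G ρ t)) := by
  apply Measure.measurable_measure.2
  intro s hs
  simp_rw [Measure.smul_apply, Measure.restrict_apply hs, smul_eq_mul]
  exact measSliceFn

lemma measPairMap {a b : ℝ → ℝ} (ha : Measurable a) (hb : Measurable b) (r : ℝ) :
    Measurable (fun z : Euc d => (a r • z, b r • z)) :=
  ((measurable_const_smul (a r))).prodMk ((measurable_const_smul (b r)))

lemma measF {a b : ℝ → ℝ} (ha : Measurable a) (hb : Measurable b) :
    Measurable (fun r : ℝ => (volume (Metric.ball (0:Euc d) 1))⁻¹ •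
      Measure.map (fun z : Euc d => (a r • z, b r • z))
        (volume.restrict (Metric.ball (0:Euc d) 1))) := by
  apply Measure.measurable_measure.2
  intro s hs
  simp_rw [Measure.smul_apply, Measure.map_apply (measPairMap ha hb _) hs, smul_eq_mul]
  apply Measurable.const_mul
  have hS : MeasurableSet {p : ℝ × Euc d | (a p.1 • p.2, b p.1 • p.2) ∈ s} := by
    have h1 : Measurable fun p : ℝ × Euc d => a p.1 • p.2 :=
      (continuous_smul.measurable).comp ((ha.comp measurable_fst).prodMk measurable_snd)
    have h2 : Measurable fun p : ℝ × Euc d => b p.1 • p.2 :=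
      (continuous_smul.measurable).comp ((hb.comp measurable_fst).prodMk measurable_snd)
    exact (h1.prodMk h2) hs
  exact measurable_measure_prodMk_left hS

lemma marginal (hd : 0 < d) (hR : 0 < R) (hmono : StrictMonoOn φ (phiDom R))
    (hconv : ConvexOn ℝ (phiDom R) φ)
    {x : Euc d} (hx : x ∈ openBall d R) {a b q : ℝ → ℝ}
    (hameas : Measurable a) (hbmeas : Measurable b)
    (hq : ∀ r : ℝ, q r = sig R φ (φ ‖x‖ - Real.log r))
    {p : Euc d × Euc d → Euc d} (hp : Measurable p)
    (hpc : ∀ (r : ℝ) (z : Euc d), p (a r • z, b r • z) = q r • z) :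
    (Measure.bind (volume.restrict (Ioc (0:ℝ) 1)) (fun r =>
        (volume (Metric.ball (0:Euc d) 1))⁻¹ •
          Measure.map (fun z : Euc d => (a r • z, b r • z))
            (volume.restrict (Metric.ball (0:Euc d) 1)))).map p
      = sliceKernel (openBall d R) (fun z => Real.exp (-φ ‖z‖)) x := by
  ext A hA
  set ρx := Real.exp (-φ ‖x‖) with hρxdef
  have hρx : 0 < ρx := Real.exp_pos _
  rw [Measure.map_apply hp hA, Measure.bind_apply (hp hA) (measF hameas hbmeas).aemeasurable]
  rw [sliceKernel, Measure.smul_apply, Measure.bind_apply hA measUnif.aemeasurable, smul_eq_mul]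
  have hgt_eq : ∀ t : ℝ, ((volume (levelSet (openBall d R) (fun z => Real.exp (-φ ‖z‖)) t))⁻¹
        • volume.restrict (levelSet (openBall d R) (fun z => Real.exp (-φ ‖z‖)) t)) A
      = (volume (levelSet (openBall d R) (fun z => Real.exp (-φ ‖z‖)) t))⁻¹
        * volume (A ∩ levelSet (openBall d R) (fun z => Real.exp (-φ ‖z‖)) t) := fun t => by
    rw [Measure.smul_apply, Measure.restrict_apply hA, smul_eq_mul]
  simp_rw [hgt_eq]
  rw [lintegral_Ioc_scale hρx measSliceFn, ← mul_assoc,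
    ENNReal.inv_mul_cancel (ENNReal.ofReal_pos.2 hρx).ne' ENNReal.ofReal_ne_top, one_mul]
  rw [← setLIntegral_congr (Ioo_ae_eq_Ioc (a := (0:ℝ)) (b := 1)),
    ← setLIntegral_congr (Ioo_ae_eq_Ioc (a := (0:ℝ)) (b := 1))]
  apply setLIntegral_congr_fun_ae measurableSet_Ioo (ae_of_all _ ?_)
  rintro r ⟨hr0, hr1⟩
  set c : ℝ := φ ‖x‖ - Real.log r with hcdef
  have hc0 : φ 0 < c := by
    have := Real.log_neg hr0 hr1
    have := phi_zero_le hR hmono hx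
    rw [hcdef]; linarith
  have hσ : 0 < sig R φ c := sig_pos hR hmono hconv hc0
  have hexp : Real.exp (-c) = ρx * r := by
    rw [hcdef, neg_sub, Real.exp_sub, Real.exp_log hr0, hρxdef, Real.exp_neg]
    field_simp
  rw [Measure.smul_apply, Measure.map_apply (measPairMap hameas hbmeas r) (hp hA),
    smul_eq_mul, Measure.restrict_apply ((measPairMap hameas hbmeas r) (hp hA))]
  have hset : (fun z : Euc d => (a r • z, b r • z)) ⁻¹' (p ⁻¹' A)
      = (fun z : Euc d => sig R φ c • z) ⁻¹' A := by
    ext z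
    simp only [mem_preimage, hpc r z, hq r, hcdef]
  rw [hset, ← hexp]
  exact (key_int hd hR hmono hconv hc0.le hσ).symm

lemma gamma_lintegral (hd : 0 < d) {a b : ℝ → ℝ} (ha : Measurable a) (hb : Measurable b) :
    ∫⁻ pz : Euc d × Euc d, edist pz.1 pz.2
        ∂(Measure.bind (volume.restrict (Ioc (0:ℝ) 1)) (fun r =>
          (volume (Metric.ball (0:Euc d) 1))⁻¹ •
            Measure.map (fun z : Euc d => (a r • z, b r • z))
              (volume.restrict (Metric.ball (0:Euc d) 1))))
      = ENNReal.ofReal (d/(d+1)) * ∫⁻ r in Ioc (0:ℝ) 1, ENNReal.ofReal |a r - b r| := by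
  haveI : Nontrivial (Euc d) :=
    Module.nontrivial_of_finrank_pos (R := ℝ) (by rwa [finrank_euclideanSpace_fin])
  set cB := volume (Metric.ball (0:Euc d) 1) with hcB
  have hcB0 : cB ≠ 0 := (Metric.measure_ball_pos volume _ one_pos).ne'
  have hcBtop : cB ≠ ⊤ := measure_ball_lt_top.ne
  rw [Measure.lintegral_bind (measF ha hb).aemeasurable measurable_edist.aemeasurable]
  have per_r : ∀ r : ℝ, ∫⁻ pz : Euc d × Euc d, edist pz.1 pz.2
        ∂((volume (Metric.ball (0:Euc d) 1))⁻¹ •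
          Measure.map (fun z : Euc d => (a r • z, b r • z))
            (volume.restrict (Metric.ball (0:Euc d) 1)))
      = ENNReal.ofReal |a r - b r| * ENNReal.ofReal (d/(d+1)) := by
    intro r
    rw [lintegral_smul_measure, lintegral_map measurable_edist (measPairMap ha hb r)]
    have hdist : ∀ z : Euc d, edist (a r • z) (b r • z)
        = ENNReal.ofReal |a r - b r| * ENNReal.ofReal ‖z‖ := by
      intro z
      rw [edist_dist, dist_eq_norm, ← sub_smul, norm_smul, Real.norm_eq_abs,
        ENNReal.ofReal_mul (abs_nonneg _)]
    rw [lintegral_congr hdist, lintegral_const_mul _ measurable_norm.ennreal_ofReal,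
      moment_ball hd, ← hcB]
    have : cB⁻¹ * (ENNReal.ofReal |a r - b r| * (cB * ENNReal.ofReal (↑d / (↑d+1))))
        = (cB⁻¹ * cB) * (ENNReal.ofReal |a r - b r| * ENNReal.ofReal (↑d / (↑d+1))) := by
      ring
    rw [smul_eq_mul, this, ENNReal.inv_mul_cancel hcB0 hcBtop, one_mul]
  rw [lintegral_congr (fun r => per_r r), lintegral_mul_const' _ _ ENNReal.ofReal_ne_top,
    mul_comm]

end SliceAux

open SliceAux in
theorem statement2 (d : ℕ) (hd : 0 < d) (R : ℝ≥0∞) (hR : 0 < R) (φ : ℝ → ℝ)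
    (hmono : StrictMonoOn φ (phiDom R)) (hconv : ConvexOn ℝ (phiDom R) φ)
    (hint : IntegrableOn (fun x : Euc d => Real.exp (-φ ‖x‖)) (openBall d R))
    (x y : Euc d) (hx : x ∈ openBall d R) (hy : y ∈ openBall d R) :
    wassersteinDist
        (sliceKernel (openBall d R) (fun z => Real.exp (-φ ‖z‖)) x)
        (sliceKernel (openBall d R) (fun z => Real.exp (-φ ‖z‖)) y)
      ≤ ENNReal.ofReal (((d : ℝ) / ((d : ℝ) + 1)) *
          ((volume (Metric.closedBall (0 : Euc d) 1)).toReal ^ ((1 : ℝ) / (d : ℝ)))⁻¹ *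
          ∫ r in Ioc (0 : ℝ) 1,
            |(volume (levelSet (openBall d R) (fun z => Real.exp (-φ ‖z‖))
                  (r * Real.exp (-φ ‖x‖)))).toReal ^ ((1 : ℝ) / (d : ℝ)) -
              (volume (levelSet (openBall d R) (fun z => Real.exp (-φ ‖z‖))
                  (r * Real.exp (-φ ‖y‖)))).toReal ^ ((1 : ℝ) / (d : ℝ))|) := by
  haveI : Nontrivial (Euc d) :=
    Module.nontrivial_of_finrank_pos (R := ℝ) (by rwa [finrank_euclideanSpace_fin])
  set ax : ℝ → ℝ := fun r => sig R φ (φ ‖x‖ - Real.log r) with hax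
  set ay : ℝ → ℝ := fun r => sig R φ (φ ‖y‖ - Real.log r) with hay
  have haxm : Measurable ax :=
    (sig_mono hR hmono hconv).measurable.comp (measurable_const.sub Real.measurable_log)
  have haym : Measurable ay :=
    (sig_mono hR hmono hconv).measurable.comp (measurable_const.sub Real.measurable_log)
  set γ : Measure (Euc d × Euc d) :=
    Measure.bind (volume.restrict (Ioc (0:ℝ) 1)) (fun r =>
      (volume (Metric.ball (0:Euc d) 1))⁻¹ •
        Measure.map (fun z : Euc d => (ax r • z, ay r • z))
          (volume.restrict (Metric.ball (0:Euc d) 1))) with hγ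
  have hmarg1 : γ.map Prod.fst = sliceKernel (openBall d R) (fun z => Real.exp (-φ ‖z‖)) x :=
    marginal hd hR hmono hconv hx haxm haym (fun r => rfl) measurable_fst (fun r z => rfl)
  have hmarg2 : γ.map Prod.snd = sliceKernel (openBall d R) (fun z => Real.exp (-φ ‖z‖)) y :=
    marginal hd hR hmono hconv hy haxm haym (fun r => rfl) measurable_snd (fun r z => rfl)
  have hW : wassersteinDist
      (sliceKernel (openBall d R) (fun z => Real.exp (-φ ‖z‖)) x)
      (sliceKernel (openBall d R) (fun z => Real.exp (-φ ‖z‖)) y)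
      ≤ ∫⁻ p : Euc d × Euc d, edist p.1 p.2 ∂γ :=
    iInf₂_le γ ⟨hmarg1, hmarg2⟩
  refine le_trans hW ?_
  rw [hγ, gamma_lintegral hd haxm haym]
  have hb : ∀ r ∈ Ioc (0:ℝ) 1, |ax r - ay r| ≤ |sig R φ (φ ‖x‖) - sig R φ (φ ‖y‖)| := by
    rintro r ⟨hr0, hr1⟩
    have hlog : 0 ≤ -Real.log r := neg_nonneg.2 (Real.log_nonpos hr0.le hr1)
    have h := sig_bound hR hmono hconv (v := -Real.log r)
      (phi_zero_le hR hmono hx) (phi_zero_le hR hmono hy) hlog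
    rw [← sub_eq_add_neg, ← sub_eq_add_neg] at h
    exact h
  have hintg : Integrable (fun r => |ax r - ay r|) (volume.restrict (Ioc (0:ℝ) 1)) := by
    apply Integrable.mono' (g := fun _ => |sig R φ (φ ‖x‖) - sig R φ (φ ‖y‖)|)
      (integrableOn_const measure_Ioc_lt_top.ne)
      ((haxm.sub haym).abs.aestronglyMeasurable)
    exact (ae_restrict_iff' measurableSet_Ioc).2 (ae_of_all _ fun r hr => by
      rw [Real.norm_eq_abs, abs_abs]; exact hb r hr)
  rw [← ofReal_integral_eq_lintegral_ofReal hintg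
    (ae_of_all _ fun r => abs_nonneg _), ← ENNReal.ofReal_mul (by positivity)]
  apply le_of_eq
  congr 1
  have hcB : volume (Metric.closedBall (0:Euc d) 1) = volume (Metric.ball (0:Euc d) 1) :=
    Measure.addHaar_closedBall_eq_addHaar_ball _ _ _
  set cV : ℝ := (volume (Metric.ball (0:Euc d) 1)).toReal with hcV
  have hcV0 : 0 < cV :=
    ENNReal.toReal_pos (Metric.measure_ball_pos volume _ one_pos).ne' measure_ball_lt_top.ne
  set cT : ℝ := cV ^ ((1:ℝ)/(d:ℝ)) with hcT
  have hcT0 : 0 < cT := Real.rpow_pos_of_pos hcV0 _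
  have hdR : (0:ℝ) < (d:ℝ) := by exact_mod_cast hd
  have hvol : ∀ (w : Euc d), w ∈ openBall d R → ∀ r ∈ Ioc (0:ℝ) 1,
      (volume (levelSet (openBall d R) (fun z => Real.exp (-φ ‖z‖))
          (r * Real.exp (-φ ‖w‖)))).toReal ^ ((1:ℝ)/(d:ℝ))
        = sig R φ (φ ‖w‖ - Real.log r) * cT := by
    rintro w hw r ⟨hr0, hr1⟩
    have hc : φ 0 ≤ φ ‖w‖ - Real.log r := by
      have h1 := Real.log_nonpos hr0.le hr1
      have h2 := phi_zero_le hR hmono hw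
      linarith
    have hσ0 : 0 ≤ sig R φ (φ ‖w‖ - Real.log r) := sig_nonneg hR hmono hconv hc
    have hexp : r * Real.exp (-φ ‖w‖) = Real.exp (-(φ ‖w‖ - Real.log r)) := by
      rw [neg_sub, Real.exp_sub, Real.exp_log hr0, Real.exp_neg]
      field_simp
    rw [hexp, levelSet_volume hd hR hmono hconv hc, ENNReal.toReal_mul,
      ENNReal.toReal_ofReal (pow_nonneg hσ0 d), ← hcV,
      Real.mul_rpow (pow_nonneg hσ0 d) hcV0.le, ← hcT,
      ← Real.rpow_natCast (sig R φ (φ ‖w‖ - Real.log r)) d, ← Real.rpow_mul hσ0]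
    have : (d:ℝ) * ((1:ℝ)/(d:ℝ)) = 1 := by field_simp
    rw [this, Real.rpow_one]
  have hcongr : ∀ r ∈ Ioc (0:ℝ) 1,
      |(volume (levelSet (openBall d R) (fun z => Real.exp (-φ ‖z‖))
            (r * Real.exp (-φ ‖x‖)))).toReal ^ ((1:ℝ)/(d:ℝ)) -
        (volume (levelSet (openBall d R) (fun z => Real.exp (-φ ‖z‖))
            (r * Real.exp (-φ ‖y‖)))).toReal ^ ((1:ℝ)/(d:ℝ))|
      = cT * |ax r - ay r| := by
    intro r hr
    rw [hvol x hx r hr, hvol y hy r hr, ← sub_mul, abs_mul, abs_of_pos hcT0, mul_comm]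
  rw [setIntegral_congr_fun measurableSet_Ioc hcongr, integral_const_mul, hcB, ← hcV, ← hcT]
  field_simp
end
end

section
/- Let G ⊆ ℝ^d be Borel and ρ : G → (0,∞) Lebesgue-integrable with target distribution π. Then the simple slice sampling transition kernel U_ρ is reversible with respect to π, i.e. for all Borel A, B ⊆ G: ∫_B U_ρ(x,A) π(dx) = ∫_A U_ρ(x,B) π(dx). In particular, π is a stationary distribution of U_ρ. -/
open MeasureTheory Set ENNReal Filter

noncomputable section

/-- The target distribution `π(A) = ∫_A ρ dλ_d / ∫_G ρ dλ_d`. -/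
def targetMeasure {d : ℕ} (G : Set (Euc d)) (ρ : Euc d → ℝ) : Measure (Euc d) :=
  (∫⁻ x in G, ENNReal.ofReal (ρ x))⁻¹ •
    ((volume.restrict G).withDensity fun x => ENNReal.ofReal (ρ x))

/-- The spectral gap `1 - ‖K - E_π‖_{L²(π) → L²(π)}` of a transition kernel `K`
reversible with respect to `π`, where the operator norm is expressed as the supremum of
`‖K f - E_π f‖_{L²(π)}` over all `f ∈ L²(π)` with `‖f‖_{L²(π)} ≤ 1`. -/
def specGap {α : Type*} [MeasurableSpace α] (π : Measure α) (K : α → Measure α) : ℝ :=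
  1 - sSup {c : ℝ | ∃ f : α → ℝ, MemLp f 2 π ∧ eLpNorm f 2 π ≤ 1 ∧
      c = (eLpNorm (fun x => (∫ y, f y ∂(K x)) - ∫ y, f y ∂π) 2 π).toReal}

/-- The auxiliary transition kernel
`Q_ρ(t, B) = (1/λ_d(G(t))) ∫_{G(t)} λ_1(B ∩ [0, ρ(x)]) / ρ(x) dx` on `(0, ∞)`. -/
def auxKernel {d : ℕ} (G : Set (Euc d)) (ρ : Euc d → ℝ) (t : ℝ) : Measure ℝ :=
  (volume (levelSet G ρ t))⁻¹ •
    ((volume.restrict (levelSet G ρ t)).bind fun x =>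
      (ENNReal.ofReal (ρ x))⁻¹ • volume.restrict (Icc (0 : ℝ) (ρ x)))

/-- The measure `μ(B) = ∫_B ℓ_ρ(t) dt / ∫_0^∞ ℓ_ρ(r) dr` on `(0, ∞)`,
where `ℓ_ρ(t) = λ_d(G(t))` is the level-set function. -/
def auxMeasure {d : ℕ} (G : Set (Euc d)) (ρ : Euc d → ℝ) : Measure ℝ :=
  (∫⁻ t in Ioi (0 : ℝ), volume (levelSet G ρ t))⁻¹ •
    ((volume.restrict (Ioi (0 : ℝ))).withDensity fun t => volume (levelSet G ρ t))

variable {d : ℕ} {G : Set (Euc d)} {ρ : Euc d → ℝ}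

lemma levelSet_meas (hG : MeasurableSet G) (hρ : Measurable ρ) (t : ℝ) :
    MeasurableSet (levelSet G ρ t) :=
  hG.inter (hρ measurableSet_Ici)

lemma levelSet_subset (t : ℝ) : levelSet G ρ t ⊆ G := fun _ hx => hx.1

lemma vol_inter_anti (S : Set (Euc d)) :
    Antitone fun t => volume (S ∩ levelSet G ρ t) := by
  intro s t hst
  exact measure_mono (inter_subset_inter_right _ fun x hx => ⟨hx.1, hst.trans hx.2⟩)

lemma meas_h (S : Set (Euc d)) :
    Measurable fun t => (volume (levelSet G ρ t))⁻¹ * volume (S ∩ levelSet G ρ t) := by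
  have h1 : Antitone fun t => volume (levelSet G ρ t) := by
    have := vol_inter_anti (G := G) (ρ := ρ) univ
    simpa [Set.univ_inter] using this
  exact (h1.measurable.inv).mul (vol_inter_anti S).measurable

lemma kernel_meas (hG : MeasurableSet G) (hρ : Measurable ρ) :
    Measurable fun t => (volume (levelSet G ρ t))⁻¹ • volume.restrict (levelSet G ρ t) := by
  apply Measure.measurable_of_measurable_coe
  intro s hs
  simp only [Measure.smul_apply, smul_eq_mul, Measure.restrict_apply hs]
  exact meas_h s

lemma sliceKernel_apply (hG : MeasurableSet G) (hρ : Measurable ρ) (x : Euc d)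
    {S : Set (Euc d)} (hS : MeasurableSet S) :
    sliceKernel G ρ x S = (ENNReal.ofReal (ρ x))⁻¹ *
      ∫⁻ t in Ioc (0 : ℝ) (ρ x),
        (volume (levelSet G ρ t))⁻¹ * volume (S ∩ levelSet G ρ t) := by
  rw [sliceKernel, Measure.smul_apply, smul_eq_mul,
    Measure.bind_apply hS (kernel_meas hG hρ).aemeasurable]
  congr 1
  refine lintegral_congr fun t => ?_
  rw [Measure.smul_apply, smul_eq_mul, Measure.restrict_apply hS]

lemma key (hG : MeasurableSet G) (hρ : Measurable ρ) (hpos : ∀ x ∈ G, 0 < ρ x)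
    {A B : Set (Euc d)} (hA : MeasurableSet A) (hB : MeasurableSet B) :
    ∫⁻ x in B, sliceKernel G ρ x A ∂(targetMeasure G ρ)
      = (∫⁻ x in G, ENNReal.ofReal (ρ x))⁻¹ *
        ∫⁻ t in Ioi (0 : ℝ),
          (volume (levelSet G ρ t))⁻¹ * volume (A ∩ levelSet G ρ t)
            * volume (B ∩ levelSet G ρ t) := by
  set h : ℝ → ℝ≥0∞ := fun t => (volume (levelSet G ρ t))⁻¹ * volume (A ∩ levelSet G ρ t)
    with hh
  have hmono : Monotone fun r : ℝ => ∫⁻ t in Ioc (0 : ℝ) r, h t := by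
    intro r r' hr
    exact lintegral_mono_set (Ioc_subset_Ioc_right hr)
  have hf : Measurable fun x => (ENNReal.ofReal (ρ x))⁻¹ * ∫⁻ t in Ioc (0 : ℝ) (ρ x), h t :=
    ((ENNReal.measurable_ofReal.comp hρ).inv).mul (hmono.measurable.comp hρ)
  rw [targetMeasure, Measure.restrict_smul, lintegral_smul_measure]
  congr 1
  simp only [sliceKernel_apply hG hρ _ hA, ← hh]
  rw [restrict_withDensity hB, Measure.restrict_restrict hB,
    lintegral_withDensity_eq_lintegral_mul _ hρ.ennreal_ofReal hf]
  have step1 : ∫⁻ x in B ∩ G,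
      ENNReal.ofReal (ρ x) * ((ENNReal.ofReal (ρ x))⁻¹ * ∫⁻ t in Ioc (0 : ℝ) (ρ x), h t)
      = ∫⁻ x in B ∩ G, ∫⁻ t in Ioi (0 : ℝ),
          h t * (levelSet G ρ t).indicator (1 : Euc d → ℝ≥0∞) x := by
    refine setLIntegral_congr_fun (hB.inter hG) (fun x hx => ?_)
    have hρx : 0 < ρ x := hpos x hx.2
    rw [← mul_assoc, ENNReal.mul_inv_cancel (by simpa using hρx) ofReal_ne_top, one_mul]
    have : ∀ t ∈ Ioi (0 : ℝ),
        h t * (levelSet G ρ t).indicator (1 : Euc d → ℝ≥0∞) x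
          = (Ioc (0 : ℝ) (ρ x)).indicator h t := by
      intro t ht
      simp only [Set.indicator_apply, Pi.one_apply, Set.mem_Ioc, levelSet, Set.mem_setOf_eq]
      by_cases hle : t ≤ ρ x
      · simp [hle, hx.2, Set.mem_Ioi.mp ht]
      · simp [hle]
    rw [setLIntegral_congr_fun measurableSet_Ioi this,
      lintegral_indicator measurableSet_Ioc h, Measure.restrict_restrict measurableSet_Ioc,
      Set.inter_eq_left.2 (fun t ht => ht.1)]
  simp only [Pi.mul_apply]
  rw [step1]
  -- swap the order of integration
  have hS : MeasurableSet {p : Euc d × ℝ | p.1 ∈ levelSet G ρ p.2} := by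
    have : {p : Euc d × ℝ | p.1 ∈ levelSet G ρ p.2}
        = (Prod.fst ⁻¹' G) ∩ {p : Euc d × ℝ | p.2 ≤ ρ p.1} := by
      ext p; simp [levelSet]
    rw [this]
    exact (hG.preimage measurable_fst).inter
      (measurableSet_le measurable_snd (hρ.comp measurable_fst))
  have hFmeas : AEMeasurable (Function.uncurry fun (x : Euc d) (t : ℝ) =>
      h t * (levelSet G ρ t).indicator (1 : Euc d → ℝ≥0∞) x)
      ((volume.restrict (B ∩ G)).prod (volume.restrict (Ioi (0 : ℝ)))) := by
    have heq : (Function.uncurry fun (x : Euc d) (t : ℝ) =>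
        h t * (levelSet G ρ t).indicator (1 : Euc d → ℝ≥0∞) x)
        = fun p : Euc d × ℝ => h p.2 *
            ({p : Euc d × ℝ | p.1 ∈ levelSet G ρ p.2}).indicator (1 : Euc d × ℝ → ℝ≥0∞) p := by
      rfl
    rw [heq]
    exact (((meas_h A).comp measurable_snd).mul
      (measurable_one.indicator hS)).aemeasurable
  rw [lintegral_lintegral_swap hFmeas]
  refine lintegral_congr fun t => ?_
  rw [lintegral_const_mul _ (measurable_one.indicator (levelSet_meas hG hρ t)),
    lintegral_indicator_one (levelSet_meas hG hρ t),
    Measure.restrict_apply (levelSet_meas hG hρ t)]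
  rw [hh, show levelSet G ρ t ∩ (B ∩ G) = B ∩ levelSet G ρ t from by
    ext x; simp only [mem_inter_iff, levelSet, mem_setOf_eq]; tauto]

lemma lv_finite (hG : MeasurableSet G) (hρ : Measurable ρ) (hpos : ∀ x ∈ G, 0 < ρ x)
    (hint : IntegrableOn ρ G) {t : ℝ} (ht : 0 < t) :
    volume (levelSet G ρ t) ≠ ∞ := by
  have hfin : ∫⁻ x in G, ENNReal.ofReal (ρ x) < ∞ :=
    lt_of_le_of_lt (lintegral_mono fun x => Real.ofReal_le_enorm _) hint.2
  have hset : volume (levelSet G ρ t)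
      = (volume.restrict G) {x | ENNReal.ofReal t ≤ ENNReal.ofReal (ρ x)} := by
    rw [Measure.restrict_apply' hG]
    congr 1
    ext x
    simp only [levelSet, Set.mem_inter_iff, Set.mem_setOf_eq]
    constructor
    · rintro ⟨hxG, hle⟩; exact ⟨ENNReal.ofReal_le_ofReal hle, hxG⟩
    · rintro ⟨hle, hxG⟩
      exact ⟨hxG, (ENNReal.ofReal_le_ofReal_iff (hpos x hxG).le).1 hle⟩
  have hne : ENNReal.ofReal t ≠ 0 := by
    simp [ENNReal.ofReal_eq_zero, not_le, ht]
  rw [hset]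
  refine ne_top_of_le_ne_top ?_
      (meas_ge_le_lintegral_div (hρ.ennreal_ofReal.aemeasurable.restrict) hne
        ENNReal.ofReal_ne_top)
  exact (ENNReal.div_lt_top hfin.ne hne).ne


theorem statement8 (d : ℕ) (G : Set (Euc d)) (hG : MeasurableSet G)
    (ρ : Euc d → ℝ) (hρ : Measurable ρ) (hpos : ∀ x ∈ G, 0 < ρ x)
    (hint : IntegrableOn ρ G) :
    (∀ A B : Set (Euc d), MeasurableSet A → MeasurableSet B →
        ∫⁻ x in B, sliceKernel G ρ x A ∂(targetMeasure G ρ)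
          = ∫⁻ x in A, sliceKernel G ρ x B ∂(targetMeasure G ρ)) ∧
      (∀ A : Set (Euc d), MeasurableSet A →
        ∫⁻ x, sliceKernel G ρ x A ∂(targetMeasure G ρ) = targetMeasure G ρ A) := by
  constructor
  · intro A B hA hB
    rw [key hG hρ hpos hA hB, key hG hρ hpos hB hA]
    congr 1
    exact lintegral_congr fun t => by rw [mul_right_comm]
  · intro A hA
    have huniv := key hG hρ hpos hA MeasurableSet.univ
    rw [Measure.restrict_univ] at huniv
    rw [huniv]
    have hptw : ∫⁻ t in Ioi (0 : ℝ),
        (volume (levelSet G ρ t))⁻¹ * volume (A ∩ levelSet G ρ t)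
          * volume (univ ∩ levelSet G ρ t)
        = ∫⁻ t in Ioi (0 : ℝ), volume (A ∩ levelSet G ρ t) := by
      refine setLIntegral_congr_fun measurableSet_Ioi (fun t ht => ?_)
      rw [Set.univ_inter]
      by_cases h0 : volume (levelSet G ρ t) = 0
      · have hb : volume (A ∩ levelSet G ρ t) = 0 :=
          le_antisymm (h0 ▸ measure_mono Set.inter_subset_right) (zero_le)
        simp [h0, hb]
      · rw [mul_right_comm, ENNReal.inv_mul_cancel h0
          (lv_finite hG hρ hpos hint (Set.mem_Ioi.mp ht)), one_mul]
    rw [hptw, targetMeasure, Measure.smul_apply, smul_eq_mul,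
      withDensity_apply _ hA, Measure.restrict_restrict hA]
    congr 1
    have hnn : 0 ≤ᵐ[volume.restrict (A ∩ G)] ρ :=
      (ae_restrict_iff' (hA.inter hG)).2 (ae_of_all _ fun x hx => (hpos x hx.2).le)
    rw [lintegral_eq_lintegral_meas_le _ hnn hρ.aemeasurable]
    refine lintegral_congr fun t => ?_
    rw [Measure.restrict_apply (measurableSet_le measurable_const hρ)]
    congr 1
    ext x
    simp only [levelSet, Set.mem_inter_iff, Set.mem_setOf_eq]
    tauto
end
end

section
/- Let G ⊆ ℝ^d be Borel and ρ : G → (0,∞) Lebesgue-integrable. Then the auxiliary transition kernel Q_ρ on (0,∞) is reversible with respect to the probability measure μ, i.e. for all Borel A, B ⊆ (0,∞): ∫_B Q_ρ(t,A) μ(dt) = ∫_A Q_ρ(t,B) μ(dt). -/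
open MeasureTheory Set ENNReal Filter

noncomputable section

section helpers

variable {d : ℕ} {G : Set (Euc d)} {ρ : Euc d → ℝ}

lemma measurable_volIcc (s : Set ℝ) : Measurable fun r : ℝ => volume (s ∩ Icc 0 r) := by
  have h : Monotone fun r : ℝ => volume (s ∩ Icc 0 r) :=
    fun _ _ h => measure_mono (inter_subset_inter_right s (Icc_subset_Icc_right h))
  exact h.measurable

lemma measurable_ell : Measurable fun t : ℝ => volume (levelSet G ρ t) := by
  have h : Antitone fun t : ℝ => volume (levelSet G ρ t) :=
    fun _ _ h => measure_mono fun x hx => ⟨hx.1, h.trans hx.2⟩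
  exact h.measurable

lemma auxKernel_apply (hρ : Measurable ρ) {A : Set ℝ} (hA : MeasurableSet A) (t : ℝ) :
    auxKernel G ρ t A = (volume (levelSet G ρ t))⁻¹ *
      ∫⁻ x in levelSet G ρ t, (ENNReal.ofReal (ρ x))⁻¹ * volume (A ∩ Icc 0 (ρ x)) := by
  have hker : Measurable fun x : Euc d =>
      (ENNReal.ofReal (ρ x))⁻¹ • volume.restrict (Icc (0:ℝ) (ρ x)) := by
    apply Measure.measurable_of_measurable_coe
    intro s hs
    simp only [Measure.smul_apply, Measure.restrict_apply hs, smul_eq_mul]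
    exact (ENNReal.measurable_ofReal.comp hρ).inv.mul ((measurable_volIcc s).comp hρ)
  rw [auxKernel, Measure.smul_apply, smul_eq_mul,
    Measure.bind_apply hA hker.aemeasurable]
  congr 1
  refine lintegral_congr fun x => ?_
  simp [Measure.smul_apply, Measure.restrict_apply hA, smul_eq_mul]

lemma ell_lt_top (hG : MeasurableSet G) (hρ : Measurable ρ) (hint : IntegrableOn ρ G) {t : ℝ} (ht : 0 < t) :
    volume (levelSet G ρ t) < ∞ := by
  have h1 : ENNReal.ofReal t * volume (levelSet G ρ t)
      ≤ ∫⁻ x in G, ENNReal.ofReal (ρ x) := by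
    calc ENNReal.ofReal t * volume (levelSet G ρ t)
        = ∫⁻ _ in levelSet G ρ t, ENNReal.ofReal t := (setLIntegral_const _ _).symm
      _ ≤ ∫⁻ x in levelSet G ρ t, ENNReal.ofReal (ρ x) := by
          refine setLIntegral_mono' (hG.inter (measurableSet_le measurable_const hρ)) fun x hx => ENNReal.ofReal_le_ofReal hx.2
      _ ≤ ∫⁻ x in G, ENNReal.ofReal (ρ x) := lintegral_mono_set fun x hx => hx.1
  have h2 : ENNReal.ofReal t * volume (levelSet G ρ t) < ∞ :=
    h1.trans_lt hint.lintegral_lt_top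
  by_contra h
  rw [not_lt, top_le_iff] at h
  rw [h, ENNReal.mul_top (ENNReal.ofReal_pos.mpr ht).ne'] at h2
  exact absurd h2 (lt_irrefl _)
end helpers

section key
variable {d : ℕ} {G : Set (Euc d)} {ρ : Euc d → ℝ}

lemma key_calc (hG : MeasurableSet G) (hρ : Measurable ρ) (hint : IntegrableOn ρ G)
    {A B : Set ℝ} (hA : MeasurableSet A) (hB : MeasurableSet B) (hB' : B ⊆ Ioi 0) :
    ∫⁻ t in B, auxKernel G ρ t A ∂(auxMeasure G ρ)
      = (∫⁻ t in Ioi (0:ℝ), volume (levelSet G ρ t))⁻¹ *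
        ∫⁻ x in G, (ENNReal.ofReal (ρ x))⁻¹
          * volume (A ∩ Icc 0 (ρ x)) * volume (B ∩ Icc 0 (ρ x)) := by
  set g : Euc d → ℝ≥0∞ := fun x => (ENNReal.ofReal (ρ x))⁻¹ * volume (A ∩ Icc 0 (ρ x)) with hg
  have hgmeas : Measurable g :=
    (ENNReal.measurable_ofReal.comp hρ).inv.mul ((measurable_volIcc A).comp hρ)
  -- measurability of t ↦ Q t A
  have hImeas : Measurable fun t => ∫⁻ x in levelSet G ρ t, g x := by
    have h : Antitone fun t => ∫⁻ x in levelSet G ρ t, g x :=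
      fun _ _ h => lintegral_mono_set fun x hx => ⟨hx.1, h.trans hx.2⟩
    exact h.measurable
  have hQmeas : Measurable fun t => auxKernel G ρ t A := by
    simp_rw [auxKernel_apply hρ hA]
    exact measurable_ell.inv.mul hImeas
  rw [auxMeasure, Measure.restrict_smul, lintegral_smul_measure]
  congr 1
  rw [setLIntegral_withDensity_eq_setLIntegral_mul _ measurable_ell hQmeas hB,
    Measure.restrict_restrict hB, inter_eq_self_of_subset_left hB']
  -- pointwise simplification on B
  have hpt : ∀ t ∈ B, volume (levelSet G ρ t) * auxKernel G ρ t A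
      = ∫⁻ x in levelSet G ρ t, g x := by
    intro t ht
    rw [auxKernel_apply hρ hA]
    rcases eq_or_ne (volume (levelSet G ρ t)) 0 with h0 | h0
    · rw [h0, zero_mul]
      exact (setLIntegral_measure_zero _ _ h0).symm
    · rw [← mul_assoc, ENNReal.mul_inv_cancel h0 (ell_lt_top hG hρ hint (hB' ht)).ne, one_mul]
  rw [show ((fun t => volume (levelSet G ρ t)) * fun t => auxKernel G ρ t A)
      = fun t => volume (levelSet G ρ t) * auxKernel G ρ t A from rfl,
    setLIntegral_congr_fun hB hpt]
  -- Tonelli setup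
  set f : ℝ → Euc d → ℝ≥0∞ :=
    fun t x => ({p : ℝ × Euc d | p.1 ≤ ρ p.2}).indicator (fun p => g p.2) (t, x) with hf
  have hfmeas : Measurable (Function.uncurry f) := by
    apply (hgmeas.comp measurable_snd).indicator
    exact measurableSet_le measurable_fst (hρ.comp measurable_snd)
  have hlevel : ∀ t : ℝ, ∫⁻ x in levelSet G ρ t, g x = ∫⁻ x in G, f t x := by
    intro t
    have h1 : ∀ x : Euc d, f t x = ({x : Euc d | t ≤ ρ x}).indicator g x := by
      intro x
      by_cases h : t ≤ ρ x
      · simp [hf, indicator_of_mem, h]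
      · simp [hf, indicator_of_notMem, h]
    simp_rw [h1]
    rw [lintegral_indicator (measurableSet_le measurable_const hρ),
      Measure.restrict_restrict (measurableSet_le measurable_const hρ)]
    congr 1
    rw [inter_comm]
    rfl
  simp_rw [hlevel]
  rw [lintegral_lintegral_swap hfmeas.aemeasurable]
  refine lintegral_congr fun x => ?_
  have h2 : ∀ t : ℝ, f t x = (Iic (ρ x)).indicator (fun _ => g x) t := by
    intro t
    by_cases h : t ≤ ρ x
    · simp [hf, indicator_of_mem, h, mem_Iic]
    · simp [hf, indicator_of_notMem, h, mem_Iic]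
  simp_rw [h2]
  rw [lintegral_indicator_const measurableSet_Iic, Measure.restrict_apply measurableSet_Iic]
  have h3 : Iic (ρ x) ∩ B = B ∩ Icc 0 (ρ x) := by
    ext s
    constructor
    · rintro ⟨h1, h2⟩; exact ⟨h2, (hB' h2).le, h1⟩
    · rintro ⟨h1, _, h2⟩; exact ⟨h2, h1⟩
  rw [h3, hg, mul_assoc]
end key


theorem statement9 (d : ℕ) (G : Set (Euc d)) (hG : MeasurableSet G)
    (ρ : Euc d → ℝ) (hρ : Measurable ρ) (hpos : ∀ x ∈ G, 0 < ρ x)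
    (hint : IntegrableOn ρ G)
    (A B : Set ℝ) (hA : MeasurableSet A) (hB : MeasurableSet B)
    (hA' : A ⊆ Ioi 0) (hB' : B ⊆ Ioi 0) :
    ∫⁻ t in B, auxKernel G ρ t A ∂(auxMeasure G ρ)
      = ∫⁻ t in A, auxKernel G ρ t B ∂(auxMeasure G ρ) := by
  rw [key_calc hG hρ hint hA hB hB', key_calc hG hρ hint hB hA hA']
  congr 1
  refine lintegral_congr fun x => ?_
  ring
end
end
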